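/- arXiv:2303.15964 — 9 statements merged into one kernel-verified Lean document; each statement's English description precedes it below -/
import Mathlib

section
/- Let r ≥ 2 and let ℋ be a family of r-element sets that does not contain t pairwise disjoint members. Then there exist a set A of at most t−1 vertices and a set B of at most r(2t−2) vertices such that every member of ℋ contains at least one element of A or at least two elements of B. -/
open Finset

private lemma exists_max_matching {V : Type*} [DecidableEq V] (r t : ℕ) (hr : 2 ≤ r)
    (ℋ : Set (Finset V)) (hunif : ∀ H ∈ ℋ, H.card = r)
    (hno : ¬ ∃ f : Fin t → Finset V, (∀ i, f i ∈ ℋ) ∧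
      ∀ i j : Fin t, i ≠ j → Disjoint (f i) (f j))
    (𝒢 : Set (Finset V)) (h𝒢 : 𝒢 ⊆ ℋ) :
    ∃ S : Finset (Finset V), ↑S ⊆ 𝒢 ∧ (S : Set (Finset V)).Pairwise Disjoint ∧
      S.card ≤ t - 1 ∧ ∀ H ∈ 𝒢, ∃ M ∈ S, ¬ Disjoint H M := by
  classical
  set P : ℕ → Prop := fun n => ∃ S : Finset (Finset V), ↑S ⊆ 𝒢 ∧
      (S : Set (Finset V)).Pairwise Disjoint ∧ S.card = n with hP
  have hbound : ∀ n, P n → n ≤ t - 1 := by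
    intro n ⟨S, hS𝒢, hSd, hSc⟩
    by_contra hcon
    push_neg at hcon
    have ht : t ≤ S.card := by omega
    obtain ⟨S', hS'S, hS'c⟩ := Finset.exists_subset_card_eq ht
    apply hno
    set e := S'.equivFinOfCardEq hS'c with he
    refine ⟨fun i => (e.symm i : Finset V), fun i => h𝒢 (hS𝒢 (hS'S (e.symm i).2)), ?_⟩
    intro i j hij
    have hne : ((e.symm i : Finset V)) ≠ ((e.symm j : Finset V)) := by
      intro h
      apply hij
      have : e.symm i = e.symm j := Subtype.ext h
      simpa using congrArg e this
    exact hSd (hS'S (e.symm i).2) (hS'S (e.symm j).2) hne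
  have hP0 : P 0 := ⟨∅, by simp, by simp, rfl⟩
  set n := Nat.findGreatest P (t - 1) with hn
  have hPn : P n := Nat.findGreatest_spec (Nat.zero_le _) hP0
  obtain ⟨S, hS𝒢, hSd, hSc⟩ := hPn
  refine ⟨S, hS𝒢, hSd, hSc ▸ Nat.findGreatest_le _, ?_⟩
  intro H hH
  by_contra hcon
  push_neg at hcon
  have hHS : H ∉ S := by
    intro hmem
    have hd := hcon H hmem
    rw [disjoint_self] at hd
    have hc := hunif H (h𝒢 hH)
    rw [hd] at hc
    simp at hc
    omega
  have hPn1 : P (n + 1) := by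
    refine ⟨insert H S, ?_, ?_, ?_⟩
    · rw [Finset.coe_insert]
      exact Set.insert_subset hH hS𝒢
    · rw [Finset.coe_insert,
        Set.pairwise_insert_of_symmetric]
      exact ⟨hSd, fun M hM _ => hcon M hM⟩
    · rw [Finset.card_insert_of_notMem hHS, hSc]
  have h1 := hbound (n + 1) hPn1
  exact Nat.findGreatest_is_greatest (Nat.lt_succ_self n) h1 hPn1

/-- Let r ≥ 2 and let ℋ be a family of r-element sets that does not contain
t pairwise disjoint members. Then there exist a set A of at most t−1 vertices and a set B of
at most r(2t−2) vertices such that every member of ℋ contains at least one element of A or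
at least two elements of B. -/
theorem covering_proposition {V : Type*} [DecidableEq V] (r t : ℕ) (hr : 2 ≤ r)
    (ℋ : Set (Finset V)) (hunif : ∀ H ∈ ℋ, H.card = r)
    (hno : ¬ ∃ f : Fin t → Finset V, (∀ i, f i ∈ ℋ) ∧
      ∀ i j : Fin t, i ≠ j → Disjoint (f i) (f j)) :
    ∃ A B : Finset V, A.card ≤ t - 1 ∧ B.card ≤ r * (2 * t - 2) ∧
      ∀ H ∈ ℋ, (∃ a ∈ A, a ∈ H) ∨ 2 ≤ (H ∩ B).card := by
  classical
  obtain ⟨S₁, hS₁𝒢, hS₁d, hS₁c, hS₁max⟩ :=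
    exists_max_matching r t hr ℋ hunif hno ℋ (le_refl _)
  set B₁ : Finset V := S₁.biUnion id with hB₁
  set 𝒢₂ : Set (Finset V) := {H | H ∈ ℋ ∧ (H ∩ B₁).card = 1} with h𝒢₂
  obtain ⟨S₂, hS₂𝒢, hS₂d, hS₂c, hS₂max⟩ :=
    exists_max_matching r t hr ℋ hunif hno 𝒢₂ (fun H hH => hH.1)
  set B₂ : Finset V := S₂.biUnion id with hB₂
  -- card bounds for the unions
  have hcard : ∀ (S : Finset (Finset V)), ↑S ⊆ ℋ → S.card ≤ t - 1 →
      (S.biUnion id).card ≤ r * (t - 1) := by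
    intro S hS hSc
    calc (S.biUnion id).card ≤ ∑ M ∈ S, (id M).card := Finset.card_biUnion_le
      _ = ∑ M ∈ S, r := by
          apply Finset.sum_congr rfl
          intro M hM
          exact hunif M (hS hM)
      _ = S.card * r := by rw [Finset.sum_const, smul_eq_mul]
      _ ≤ (t - 1) * r := Nat.mul_le_mul_right r hSc
      _ = r * (t - 1) := Nat.mul_comm _ _
  refine ⟨B₁ ∩ B₂, B₁ ∪ B₂, ?_, ?_, ?_⟩
  · -- |A| ≤ t - 1
    have hsub : B₁ ∩ B₂ ⊆ S₂.biUnion (fun M => B₁ ∩ M) := by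
      intro x hx
      rw [Finset.mem_inter] at hx
      obtain ⟨hx1, hx2⟩ := hx
      rw [hB₂, Finset.mem_biUnion] at hx2
      obtain ⟨M, hM, hxM⟩ := hx2
      exact Finset.mem_biUnion.2 ⟨M, hM, Finset.mem_inter.2 ⟨hx1, hxM⟩⟩
    calc (B₁ ∩ B₂).card ≤ (S₂.biUnion (fun M => B₁ ∩ M)).card := Finset.card_le_card hsub
      _ ≤ ∑ M ∈ S₂, (B₁ ∩ M).card := Finset.card_biUnion_le
      _ = ∑ M ∈ S₂, 1 := by
          apply Finset.sum_congr rfl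
          intro M hM
          rw [Finset.inter_comm]
          exact (hS₂𝒢 hM).2
      _ = S₂.card := by simp
      _ ≤ t - 1 := hS₂c
  · -- |B| ≤ r * (2t-2)
    have h1 := hcard S₁ hS₁𝒢 hS₁c
    have h2 := hcard S₂ (fun H hH => (hS₂𝒢 hH).1) hS₂c
    calc (B₁ ∪ B₂).card ≤ B₁.card + B₂.card := Finset.card_union_le _ _
      _ ≤ r * (t - 1) + r * (t - 1) := Nat.add_le_add h1 h2
      _ = r * ((t - 1) + (t - 1)) := (Nat.mul_add r _ _).symm
      _ ≤ r * (2 * t - 2) := Nat.mul_le_mul_left r (by omega)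
  · -- covering
    intro H hH
    obtain ⟨M, hM, hMd⟩ := hS₁max H hH
    rw [Finset.not_disjoint_iff] at hMd
    obtain ⟨x, hxH, hxM⟩ := hMd
    have hxB₁ : x ∈ B₁ := Finset.mem_biUnion.2 ⟨M, hM, hxM⟩
    have hxHB₁ : x ∈ H ∩ B₁ := Finset.mem_inter.2 ⟨hxH, hxB₁⟩
    by_cases h2 : 2 ≤ (H ∩ B₁).card
    · right
      calc 2 ≤ (H ∩ B₁).card := h2
        _ ≤ (H ∩ (B₁ ∪ B₂)).card := Finset.card_le_card
            (Finset.inter_subset_inter_left Finset.subset_union_left)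
    · -- (H ∩ B₁).card = 1
      have hpos : 1 ≤ (H ∩ B₁).card := Finset.card_pos.2 ⟨x, hxHB₁⟩
      have h1 : (H ∩ B₁).card = 1 := by omega
      have hH𝒢₂ : H ∈ 𝒢₂ := ⟨hH, h1⟩
      obtain ⟨N, hN, hNd⟩ := hS₂max H hH𝒢₂
      rw [Finset.not_disjoint_iff] at hNd
      obtain ⟨y, hyH, hyN⟩ := hNd
      have hyB₂ : y ∈ B₂ := Finset.mem_biUnion.2 ⟨N, hN, hyN⟩
      by_cases hxy : y = x
      · left
        subst hxy
        exact ⟨y, Finset.mem_inter.2 ⟨hxB₁, hyB₂⟩, hyH⟩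
      · right
        have hsub : ({x, y} : Finset V) ⊆ H ∩ (B₁ ∪ B₂) := by
          intro z hz
          rw [Finset.mem_insert, Finset.mem_singleton] at hz
          rcases hz with rfl | rfl
          · exact Finset.mem_inter.2 ⟨hxH, Finset.mem_union_left _ hxB₁⟩
          · exact Finset.mem_inter.2 ⟨hyH, Finset.mem_union_right _ hyB₂⟩
        calc 2 = ({x, y} : Finset V).card := by
              rw [Finset.card_insert_of_notMem (by simpa using Ne.symm hxy),
                Finset.card_singleton]
          _ ≤ (H ∩ (B₁ ∪ B₂)).card := Finset.card_le_card hsub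
end

section
/- Let α > (k−1)/k. There exists c > 0 such that for all sufficiently large n: if G is a K_{k+1}-free graph on n vertices containing an induced K_k-free subgraph on at least αn vertices, then the number of copies of K_k in G is at most N(K_k, T(n,k)) − c·n^k, where T(n,k) is the k-partite Turán graph on n vertices. -/
open SimpleGraph

private lemma hasDeriv_g (w : ℝ) (m : ℕ) (a : ℝ) :
    HasDerivAt (fun x : ℝ => (w - x) * x ^ m) (-(a ^ m) + (w - a) * (m * a ^ (m - 1))) a := by
  have h1 : HasDerivAt (fun x : ℝ => w - x) (-1) a := (hasDerivAt_id a).const_sub w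
  have h2 : HasDerivAt (fun x : ℝ => x ^ m) (m * a ^ (m - 1)) a := hasDerivAt_pow m a
  have h := h1.fun_mul h2
  refine h.congr_deriv ?_
  ring

private lemma g_deriv_eq (w : ℝ) (j : ℕ) (x : ℝ) :
    deriv (fun x : ℝ => (w - x) * x ^ (j + 1)) x = x ^ j * ((j + 1) * w - (j + 2) * x) := by
  rw [(hasDeriv_g w (j + 1) x).deriv]
  simp only [Nat.add_sub_cancel]
  push_cast
  ring

private lemma g_cont (w : ℝ) (m : ℕ) (D : Set ℝ) :
    ContinuousOn (fun x : ℝ => (w - x) * x ^ m) D :=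
  (Continuous.mul (by continuity) (by continuity)).continuousOn

private lemma g_mono (m : ℕ) (hm : 1 ≤ m) (w : ℝ) :
    MonotoneOn (fun a : ℝ => (w - a) * a ^ m) (Set.Icc 0 (m * w / (m + 1))) := by
  obtain ⟨j, rfl⟩ : ∃ j, m = j + 1 := ⟨m - 1, by omega⟩
  apply monotoneOn_of_deriv_nonneg (convex_Icc _ _) (g_cont _ _ _)
  · intro x hx
    exact ((hasDeriv_g w (j + 1) x).differentiableAt).differentiableWithinAt
  · intro x hx
    rw [interior_Icc, Set.mem_Ioo] at hx
    rw [g_deriv_eq]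
    have h1 : (0:ℝ) ≤ x ^ j := le_of_lt (pow_pos hx.1 j)
    have h2 : (0:ℝ) ≤ (j + 1) * w - (j + 2) * x := by
      have := hx.2
      rw [lt_div_iff₀ (by positivity)] at this
      push_cast at this ⊢
      nlinarith
    positivity

private lemma g_strictAnti (m : ℕ) (hm : 1 ≤ m) (w : ℝ) (hw : 0 ≤ w) :
    StrictAntiOn (fun a : ℝ => (w - a) * a ^ m) (Set.Icc (m * w / (m + 1)) w) := by
  obtain ⟨j, rfl⟩ : ∃ j, m = j + 1 := ⟨m - 1, by omega⟩
  apply strictAntiOn_of_deriv_neg (convex_Icc _ _) (g_cont _ _ _)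
  intro x hx
  rw [interior_Icc, Set.mem_Ioo] at hx
  rw [g_deriv_eq]
  have hx0 : 0 < x := lt_of_le_of_lt (by positivity) hx.1
  have h2 : (j + 1 : ℝ) * w - (j + 2) * x < 0 := by
    have := hx.1
    rw [div_lt_iff₀ (by positivity)] at this
    push_cast at this ⊢
    nlinarith
  have h1 : (0:ℝ) < x ^ j := pow_pos hx0 j
  nlinarith

private lemma g_anti (m : ℕ) (hm : 1 ≤ m) (w : ℝ) (hw : 0 ≤ w) :
    AntitoneOn (fun a : ℝ => (w - a) * a ^ m) (Set.Icc (m * w / (m + 1)) w) :=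
  (g_strictAnti m hm w hw).antitoneOn

private lemma amgm (m : ℕ) (hm : 1 ≤ m) (w a : ℝ) (ha : 0 ≤ a) (haw : a ≤ w) :
    (w - a) * (a / m) ^ m ≤ (w / (m + 1)) ^ (m + 1) := by
  have hw : 0 ≤ w := le_trans ha haw
  have hm0 : (0:ℝ) < m := by exact_mod_cast hm
  have hm1 : (0:ℝ) < (m:ℝ) + 1 := by linarith
  set t : ℝ := m * w / (m + 1) with ht
  have ht0 : 0 ≤ t := by positivity
  have htw : t ≤ w := by
    rw [div_le_iff₀ hm1]; nlinarith
  have key : (w - a) * a ^ m ≤ (w - t) * t ^ m := by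
    rcases le_or_gt a t with h | h
    · exact g_mono m hm w ⟨ha, h⟩ ⟨ht0, le_refl t⟩ h
    · exact g_anti m hm w hw ⟨le_refl t, htw⟩ ⟨le_of_lt h, haw⟩ (le_of_lt h)
  have e1 : (w - t) * t ^ m = (m:ℝ) ^ m * (w / (m + 1)) ^ (m + 1) := by
    have : t = (m:ℝ) * (w / (m + 1)) := by rw [ht]; ring
    rw [this, mul_pow]
    have : w - (m:ℝ) * (w / (m + 1)) = w / (m + 1) := by field_simp; ring
    rw [this]; ring
  calc (w - a) * (a / m) ^ m = ((w - a) * a ^ m) / (m:ℝ) ^ m := by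
        rw [div_pow]; ring
    _ ≤ ((w - t) * t ^ m) / (m:ℝ) ^ m := by
        exact div_le_div_of_nonneg_right key (by positivity)
    _ = (w / (m + 1)) ^ (m + 1) := by rw [e1]; field_simp

open Classical in
private noncomputable def cnt {V : Type*} [Fintype V] [DecidableEq V]
    (G : SimpleGraph V) (r : ℕ) (W : Finset V) : ℕ :=
  (Finset.univ.filter fun S : Finset V => G.IsNClique r S ∧ S ⊆ W).card

private lemma cnt_step {V : Type*} [Fintype V] [DecidableEq V] (G : SimpleGraph V)
    (r : ℕ) (hr : 1 ≤ r) (W A : Finset V) (hAW : A ⊆ W)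
    (hW : ∀ S : Finset V, G.IsNClique (r + 2) S → ¬ S ⊆ W)
    (hA : ∀ S : Finset V, G.IsNClique (r + 1) S → ¬ S ⊆ A)
    (hmax : ∀ B : Finset V, B ⊆ W →
      (∀ S : Finset V, G.IsNClique (r + 1) S → ¬ S ⊆ B) → B.card ≤ A.card)
    (IH : ∀ W' : Finset V, (∀ S : Finset V, G.IsNClique (r + 1) S → ¬ S ⊆ W') →
      (cnt G r W' : ℝ) ≤ ((W'.card : ℝ) / r) ^ r) :
    (cnt G (r + 1) W : ℝ) ≤ ((W.card : ℝ) - A.card) * ((A.card : ℝ) / r) ^ r := by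
  classical
  set Nv : V → Finset V := fun v => Finset.univ.filter (G.Adj v) with hNv
  -- no (r+1)-clique inside W ∩ Nv v for v ∈ W
  have hfree : ∀ v ∈ W, ∀ S : Finset V, G.IsNClique (r + 1) S → ¬ S ⊆ W ∩ Nv v := by
    intro v hv S hS hsub
    have hadj : ∀ b ∈ S, G.Adj v b := by
      intro b hb
      have := hsub hb
      simp only [hNv, Finset.mem_inter, Finset.mem_filter, Finset.mem_univ, true_and] at this
      exact this.2
    have hins : G.IsNClique (r + 2) (insert v S) := hS.insert hadj
    apply hW _ hins
    intro x hx
    rcases Finset.mem_insert.mp hx with rfl | hx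
    · exact hv
    · exact Finset.inter_subset_left (hsub hx)
  -- combinatorial bound
  have hsub : (Finset.univ.filter fun S : Finset V => G.IsNClique (r + 1) S ∧ S ⊆ W) ⊆
      (W \ A).biUnion (fun v =>
        (Finset.univ.filter fun S : Finset V => G.IsNClique r S ∧ S ⊆ W ∩ Nv v).image
          (insert v)) := by
    intro S hS
    simp only [Finset.mem_filter, Finset.mem_univ, true_and] at hS
    obtain ⟨hS1, hS2⟩ := hS
    obtain ⟨v, hvS, hvA⟩ := Finset.not_subset.mp (hA S hS1)
    refine Finset.mem_biUnion.mpr ⟨v, Finset.mem_sdiff.mpr ⟨hS2 hvS, hvA⟩, ?_⟩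
    refine Finset.mem_image.mpr ⟨S.erase v, ?_, Finset.insert_erase hvS⟩
    simp only [Finset.mem_filter, Finset.mem_univ, true_and]
    refine ⟨⟨hS1.isClique.subset (by exact_mod_cast Finset.erase_subset v S), ?_⟩, ?_⟩
    · rw [Finset.card_erase_of_mem hvS, hS1.card_eq]
      omega
    · intro x hx
      have hxS := Finset.mem_of_mem_erase hx
      have hxv := Finset.ne_of_mem_erase hx
      refine Finset.mem_inter.mpr ⟨hS2 hxS, ?_⟩
      simp only [hNv, Finset.mem_filter, Finset.mem_univ, true_and]
      exact hS1.isClique hvS hxS (Ne.symm hxv)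
  have hcard : cnt G (r + 1) W ≤ ∑ v ∈ W \ A, cnt G r (W ∩ Nv v) := by
    calc cnt G (r + 1) W ≤ ((W \ A).biUnion _).card := Finset.card_le_card hsub
      _ ≤ ∑ v ∈ W \ A, ((Finset.univ.filter fun S : Finset V =>
            G.IsNClique r S ∧ S ⊆ W ∩ Nv v).image (insert v)).card :=
          Finset.card_biUnion_le
      _ ≤ ∑ v ∈ W \ A, cnt G r (W ∩ Nv v) := by
          apply Finset.sum_le_sum
          intro v hv
          exact Finset.card_image_le
  -- real bound
  have hterm : ∀ v ∈ W \ A, (cnt G r (W ∩ Nv v) : ℝ) ≤ ((A.card : ℝ) / r) ^ r := by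
    intro v hv
    have hvW : v ∈ W := (Finset.mem_sdiff.mp hv).1
    have h1 := IH (W ∩ Nv v) (hfree v hvW)
    refine h1.trans ?_
    have hle : ((W ∩ Nv v).card : ℝ) ≤ (A.card : ℝ) := by
      exact_mod_cast hmax _ Finset.inter_subset_left (hfree v hvW)
    have hr0 : (0:ℝ) < r := by exact_mod_cast hr
    apply pow_le_pow_left₀ (by positivity)
    exact div_le_div_of_nonneg_right hle hr0.le
  calc (cnt G (r + 1) W : ℝ) ≤ (∑ v ∈ W \ A, cnt G r (W ∩ Nv v) : ℕ) := by
        exact_mod_cast hcard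
    _ = ∑ v ∈ W \ A, (cnt G r (W ∩ Nv v) : ℝ) := by push_cast; rfl
    _ ≤ (W \ A).card • (((A.card : ℝ) / r) ^ r) := Finset.sum_le_card_nsmul _ _ _ hterm
    _ = ((W.card : ℝ) - A.card) * ((A.card : ℝ) / r) ^ r := by
        rw [Finset.card_sdiff_of_subset hAW, nsmul_eq_mul, Nat.cast_sub (Finset.card_le_card hAW)]

private lemma cnt_le {V : Type*} [Fintype V] [DecidableEq V] (G : SimpleGraph V) :
    ∀ r : ℕ, 1 ≤ r → ∀ W : Finset V,
      (∀ S : Finset V, G.IsNClique (r + 1) S → ¬ S ⊆ W) →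
      (cnt G r W : ℝ) ≤ ((W.card : ℝ) / r) ^ r := by
  intro r
  induction r with
  | zero => exact fun h => absurd h (by omega)
  | succ r IH =>
    intro _ W hW
    classical
    rcases Nat.eq_zero_or_pos r with rfl | hr
    · -- base case: 1-cliques
      have hsub : (Finset.univ.filter fun S : Finset V => G.IsNClique 1 S ∧ S ⊆ W) ⊆
          W.image (fun v => ({v} : Finset V)) := by
        intro S hS
        simp only [Finset.mem_filter, Finset.mem_univ, true_and] at hS
        obtain ⟨v, rfl⟩ := Finset.card_eq_one.mp hS.1.card_eq
        exact Finset.mem_image.mpr ⟨v, hS.2 (Finset.mem_singleton_self v), rfl⟩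
      have h1 : cnt G 1 W ≤ W.card :=
        le_trans (Finset.card_le_card hsub) Finset.card_image_le
      have : (cnt G 1 W : ℝ) ≤ (W.card : ℝ) := by exact_mod_cast h1
      simpa using this
    · -- inductive step
      set 𝒜 : Finset (Finset V) := Finset.univ.filter
        (fun B : Finset V => B ⊆ W ∧ ∀ S : Finset V, G.IsNClique (r + 1) S → ¬ S ⊆ B)
        with h𝒜
      have hne : 𝒜.Nonempty := by
        refine ⟨∅, ?_⟩
        simp only [h𝒜, Finset.mem_filter, Finset.mem_univ, true_and]
        refine ⟨Finset.empty_subset W, ?_⟩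
        intro S hS hsub
        have : S = ∅ := Finset.subset_empty.mp hsub
        rw [this] at hS
        have := hS.card_eq
        simp at this
      obtain ⟨A, hAmem, hAmax⟩ := Finset.exists_max_image 𝒜 Finset.card hne
      simp only [h𝒜, Finset.mem_filter, Finset.mem_univ, true_and] at hAmem
      obtain ⟨hAW, hA⟩ := hAmem
      have hmax : ∀ B : Finset V, B ⊆ W →
          (∀ S : Finset V, G.IsNClique (r + 1) S → ¬ S ⊆ B) → B.card ≤ A.card := by
        intro B hBW hBfree
        apply hAmax
        simp only [h𝒜, Finset.mem_filter, Finset.mem_univ, true_and]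
        exact ⟨hBW, hBfree⟩
      have hstep := cnt_step G r hr W A hAW hW hA hmax (fun W' h => IH hr W' h)
      refine hstep.trans ?_
      have := amgm r hr (W.card : ℝ) (A.card : ℝ) (by positivity)
        (by exact_mod_cast Finset.card_le_card hAW)
      convert this using 2 <;> push_cast <;> rfl

/-- The number of copies of `K_k` in `G`, i.e. the number of `k`-cliques. -/
noncomputable def kCliqueCount {V : Type*} (G : SimpleGraph V) (k : ℕ) : ℕ :=
  Set.ncard {S : Finset V | G.IsNClique k S}

private lemma turan_lower (n k : ℕ) (hk : 1 ≤ k) :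
    ((n / k : ℕ) ^ k : ℝ) ≤ (kCliqueCount (turanGraph n k) k : ℝ) := by
  classical
  set m := n / k with hm
  have hkm : k * m ≤ n := by
    rw [hm, mul_comm]; exact Nat.div_mul_le_self n k
  have hlt : ∀ (i : Fin k) (j : Fin m), (i : ℕ) + k * (j : ℕ) < n := by
    intro i j
    have h1 : (i : ℕ) + k * (j : ℕ) < k * ((j : ℕ) + 1) := by
      nlinarith [i.isLt, j.isLt]
    have h2 : k * ((j : ℕ) + 1) ≤ k * m := Nat.mul_le_mul_left k j.isLt
    omega
  set vtx : Fin k → Fin m → Fin n := fun i j => ⟨(i : ℕ) + k * (j : ℕ), hlt i j⟩ with hvtx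
  have hmod : ∀ (i : Fin k) (j : Fin m), ((vtx i j : Fin n) : ℕ) % k = (i : ℕ) := by
    intro i j
    simp only [hvtx]
    rw [Nat.add_mul_mod_self_left, Nat.mod_eq_of_lt i.isLt]
  set f : (Fin k → Fin m) → Finset (Fin n) := fun g => Finset.univ.image (fun i => vtx i (g i))
    with hf
  have hinj2 : ∀ (g g' : Fin k → Fin m) (i i' : Fin k), vtx i (g i) = vtx i' (g' i') → i = i' := by
    intro g g' i i' h
    have := congrArg (fun v : Fin n => (v : ℕ) % k) h
    simp only [hmod] at this
    exact Fin.ext this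
  have hclique : ∀ g : Fin k → Fin m, (turanGraph n k).IsNClique k (f g) := by
    intro g
    constructor
    · intro x hx y hy hxy
      simp only [hf, Finset.coe_image, Set.mem_image, Finset.mem_coe, Finset.coe_univ,
        Set.image_univ, Set.mem_range] at hx hy
      obtain ⟨i, rfl⟩ := hx
      obtain ⟨i', rfl⟩ := hy
      have hii : i ≠ i' := fun h => hxy (by rw [h])
      show ((vtx i (g i) : Fin n) : ℕ) % k ≠ ((vtx i' (g i') : Fin n) : ℕ) % k
      rw [hmod, hmod]
      exact fun h => hii (Fin.ext h)
    · rw [hf]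
      rw [Finset.card_image_of_injective _ (fun i i' h => hinj2 g g i i' h)]
      simp
  have hfinj : Function.Injective f := by
    intro g1 g2 h
    funext i
    have hmem : vtx i (g1 i) ∈ f g2 := by
      rw [← h, hf]
      exact Finset.mem_image.mpr ⟨i, Finset.mem_univ i, rfl⟩
    simp only [hf, Finset.mem_image, Finset.mem_univ, true_and] at hmem
    obtain ⟨i', hi'⟩ := hmem
    have hii : i' = i := hinj2 g2 g1 i' i hi'
    subst hii
    have hval : (i' : ℕ) + k * ((g2 i' : Fin m) : ℕ) = (i' : ℕ) + k * ((g1 i' : Fin m) : ℕ) :=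
      congrArg Fin.val hi'
    have h5 : k * ((g2 i' : Fin m) : ℕ) = k * ((g1 i' : Fin m) : ℕ) := Nat.add_left_cancel hval
    have : ((g2 i' : Fin m) : ℕ) = ((g1 i' : Fin m) : ℕ) :=
      Nat.eq_of_mul_eq_mul_left (by omega) h5
    exact (Fin.ext this).symm
  have hsub : Set.range f ⊆ {S : Finset (Fin n) | (turanGraph n k).IsNClique k S} := by
    rintro S ⟨g, rfl⟩; exact hclique g
  have h1 : (Set.range f).ncard ≤ kCliqueCount (turanGraph n k) k :=
    Set.ncard_le_ncard hsub (Set.toFinite _)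
  have h2 : (Set.range f).ncard = m ^ k := by
    rw [← Nat.card_coe_set_eq, Nat.card_range_of_injective hfinj]
    simp [Nat.card_eq_fintype_card, Fintype.card_fun]
  exact_mod_cast h2 ▸ h1

set_option maxHeartbeats 2000000 in
/-- Let α > (k−1)/k. There exists c > 0 such that for all sufficiently large n:
if G is a K_{k+1}-free graph on n vertices containing an induced K_k-free subgraph on at
least αn vertices, then the number of copies of K_k in G is at most
N(K_k, T(n,k)) − c·n^k. -/
theorem kk_count_deficiency (k : ℕ) (α : ℝ) (hα : ((k : ℝ) - 1) / k < α) :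
    ∃ c : ℝ, 0 < c ∧ ∃ N : ℕ, ∀ n ≥ N, ∀ G : SimpleGraph (Fin n),
      G.CliqueFree (k + 1) →
      (∃ s : Finset (Fin n), α * n ≤ (s.card : ℝ) ∧
        (G.induce (s : Set (Fin n))).CliqueFree k) →
      (kCliqueCount G k : ℝ) ≤ (kCliqueCount (turanGraph n k) k : ℝ) - c * (n : ℝ) ^ k := by
  classical
  rcases Nat.lt_or_ge k 2 with hk2 | hk2
  · -- degenerate cases k = 0, 1
    interval_cases k
    · -- k = 0
      refine ⟨1, one_pos, 1, ?_⟩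
      intro n hn G hfree _
      exfalso
      have hne : (0 : ℕ) < n := hn
      refine hfree {(⟨0, hne⟩ : Fin n)} ⟨?_, Finset.card_singleton _⟩
      rw [Finset.coe_singleton]
      exact G.isClique_singleton _
    · -- k = 1
      have hα0 : 0 < α := by norm_num at hα; linarith
      refine ⟨1, one_pos, 1, ?_⟩
      rintro n hn G _ ⟨s, hcard, hfree⟩
      exfalso
      have hs0 : s = ∅ := by
        by_contra h
        obtain ⟨v, hv⟩ := Finset.nonempty_iff_ne_empty.mpr h
        refine hfree {(⟨v, by simpa using hv⟩ : (s : Set (Fin n)))}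
          ⟨?_, Finset.card_singleton _⟩
        rw [Finset.coe_singleton]
        exact SimpleGraph.isClique_singleton _
      rw [hs0] at hcard
      simp only [Finset.card_empty, Nat.cast_zero] at hcard
      have hn' : (1:ℝ) ≤ (n:ℝ) := by exact_mod_cast hn
      nlinarith
  · -- main case k ≥ 2
    obtain ⟨M, rfl⟩ : ∃ M, k = M + 1 := ⟨k - 1, by omega⟩
    have hM : 1 ≤ M := by omega
    set K : ℝ := (M : ℝ) + 1 with hK
    have hKpos : 0 < K := by positivity
    have hK1 : (1:ℝ) ≤ K := by rw [hK]; have : (0:ℝ) ≤ (M:ℝ) := Nat.cast_nonneg M; linarith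
    push_cast at hα
    have hα2 : (M : ℝ) / K < α := by
      rw [hK]
      convert hα using 2
      ring
    have hα'le1 : min α 1 ≤ 1 := min_le_right _ _
    have hαk' : (M : ℝ) / K < min α 1 := by
      apply lt_min hα2
      rw [div_lt_one hKpos, hK]
      linarith
    set α' : ℝ := min α 1 with hα'
    have hα'pos : 0 < α' := lt_of_le_of_lt (show (0:ℝ) ≤ (M:ℝ)/K by positivity) hαk'
    -- δ > 0
    set δ : ℝ := 1 / K ^ (M + 1) - (1 - α') * α' ^ M / (M : ℝ) ^ M with hδdef
    have hMpos : (0:ℝ) < (M:ℝ) := by exact_mod_cast hM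
    have hδpos : 0 < δ := by
      have hanti := g_strictAnti M hM 1 one_pos.le
      have he : (M:ℝ) * 1 / ((M:ℝ) + 1) = (M:ℝ) / K := by rw [hK]; ring
      have hmem1 : (M:ℝ) * 1 / ((M:ℝ) + 1) ∈ Set.Icc ((M:ℝ) * 1 / ((M:ℝ) + 1)) 1 := by
        constructor
        · exact le_refl _
        · rw [he, div_le_one hKpos, hK]; linarith
      have hmem2 : α' ∈ Set.Icc ((M:ℝ) * 1 / ((M:ℝ) + 1)) 1 := by
        constructor
        · rw [he]; exact hαk'.le
        · exact hα'le1
      have hlt := hanti hmem1 hmem2 (by rw [he]; exact hαk')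
      simp only at hlt
      -- hlt : (1 - α') * α' ^ M < (1 - M*1/(M+1)) * (M*1/(M+1)) ^ M
      have heq : (1 - (M:ℝ) * 1 / ((M:ℝ) + 1)) * ((M:ℝ) * 1 / ((M:ℝ) + 1)) ^ M / (M:ℝ) ^ M
          = 1 / K ^ (M + 1) := by
        rw [hK, div_pow]
        have h1 : (M:ℝ) + 1 ≠ 0 := by positivity
        have h2 : (M:ℝ) ≠ 0 := ne_of_gt hMpos
        field_simp
        ring
      have hlt2 : (1 - α') * α' ^ M / (M:ℝ) ^ M
          < (1 - (M:ℝ) * 1 / ((M:ℝ) + 1)) * ((M:ℝ) * 1 / ((M:ℝ) + 1)) ^ M / (M:ℝ) ^ M := by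
        apply (div_lt_div_iff_of_pos_right (by positivity)).mpr hlt
      rw [hδdef, ← heq]
      linarith [hlt2]
    have hα'leα : α' ≤ α := min_le_left α 1
    clear_value K α' δ
    -- choose N
    obtain ⟨N₀, hN₀⟩ := exists_nat_ge (2 * K / δ)
    refine ⟨δ / 2, by positivity, max N₀ (M + 2), ?_⟩
    rintro n hn G hfree ⟨s, hscard, hsfree⟩
    have hnM : M + 2 ≤ n := le_trans (le_max_right _ _) hn
    have hnN₀ : (N₀ : ℝ) ≤ (n : ℝ) := by
      have : N₀ ≤ n := le_trans (le_max_left _ _) hn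
      exact_mod_cast this
    have hn0 : (0:ℝ) < (n:ℝ) := by exact_mod_cast (by omega : 0 < n)
    have hnK : K + 1 ≤ (n:ℝ) := by
      rw [hK]
      have : ((M + 2 : ℕ) : ℝ) ≤ (n : ℝ) := by exact_mod_cast hnM
      push_cast at this
      linarith
    have hscard_le : (s.card : ℝ) ≤ (n:ℝ) := by
      have := Finset.card_le_univ s
      rw [Fintype.card_fin] at this
      exact_mod_cast this
    have hα'n : α' * n ≤ (s.card : ℝ) :=
      le_trans (mul_le_mul_of_nonneg_right hα'leα hn0.le) hscard
    have hs_noclique : ∀ S : Finset (Fin n), G.IsNClique (M + 1) S → ¬ S ⊆ s := by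
      intro S hS hsub
      refine hsfree (S.subtype (fun x => x ∈ (s : Set (Fin n)))) ⟨?_, ?_⟩
      · intro a ha b hb hab
        simp only [Finset.mem_coe, Finset.mem_subtype] at ha hb
        exact hS.isClique ha hb (fun h => hab (Subtype.ext h))
      · rw [Finset.card_subtype, Finset.filter_true_of_mem, hS.card_eq]
        intro x hx
        simpa using hsub hx
    set 𝒜 : Finset (Finset (Fin n)) := Finset.univ.filter
      (fun B : Finset (Fin n) => ∀ S : Finset (Fin n), G.IsNClique (M + 1) S → ¬ S ⊆ B)
      with h𝒜
    have hne : 𝒜.Nonempty := by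
      refine ⟨∅, ?_⟩
      simp only [h𝒜, Finset.mem_filter, Finset.mem_univ, true_and]
      intro S hS hsub
      have he : S = ∅ := Finset.subset_empty.mp hsub
      rw [he] at hS
      have := hS.card_eq
      simp at this
    obtain ⟨A, hAmem, hAmax⟩ := Finset.exists_max_image 𝒜 Finset.card hne
    simp only [h𝒜, Finset.mem_filter, Finset.mem_univ, true_and] at hAmem
    have hmax : ∀ B : Finset (Fin n), B ⊆ Finset.univ →
        (∀ S : Finset (Fin n), G.IsNClique (M + 1) S → ¬ S ⊆ B) → B.card ≤ A.card := by
      intro B _ hBfree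
      apply hAmax
      simp only [h𝒜, Finset.mem_filter, Finset.mem_univ, true_and]
      exact hBfree
    have hsA : s.card ≤ A.card := hmax s (Finset.subset_univ s) hs_noclique
    have hA_ge : α' * n ≤ (A.card : ℝ) := le_trans hα'n (by exact_mod_cast hsA)
    have hA_le : (A.card : ℝ) ≤ (n:ℝ) := by
      have := Finset.card_le_univ A
      rw [Fintype.card_fin] at this
      exact_mod_cast this
    have hstep := cnt_step G M hM Finset.univ A (Finset.subset_univ A)
      (fun S hS _ => hfree S hS) hAmem hmax (fun W' h => cnt_le G M hM W' h)
    rw [Finset.card_univ, Fintype.card_fin] at hstep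
    have hcnt_eq : (kCliqueCount G (M + 1) : ℝ) = (cnt G (M + 1) Finset.univ : ℝ) := by
      congr 1
      unfold kCliqueCount cnt
      rw [← Set.ncard_coe_finset]
      congr 1
      ext S
      simp
    have hanti : ((n:ℝ) - A.card) * (A.card : ℝ) ^ M ≤ ((n:ℝ) - α' * n) * (α' * n) ^ M := by
      have hg := g_anti M hM (n:ℝ) hn0.le
      have hl : (M:ℝ) * (n:ℝ) / ((M:ℝ) + 1) ≤ α' * n := by
        rw [div_le_iff₀ (by positivity)]
        have h11 := hαk'
        rw [div_lt_iff₀ hKpos, hK] at h11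
        nlinarith
      exact hg ⟨hl, mul_le_of_le_one_left hn0.le hα'le1⟩ ⟨le_trans hl hA_ge, hA_le⟩ hA_ge
    have hmain : (kCliqueCount G (M + 1) : ℝ) ≤ (1 / K ^ (M + 1) - δ) * (n:ℝ) ^ (M + 1) := by
      rw [hcnt_eq]
      refine hstep.trans ?_
      have h1 : ((n:ℝ) - A.card) * ((A.card : ℝ) / M) ^ M
          = ((n:ℝ) - A.card) * (A.card : ℝ) ^ M / (M:ℝ) ^ M := by
        rw [div_pow]; ring
      have h2 : ((n:ℝ) - α' * n) * (α' * n) ^ M / (M:ℝ) ^ M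
          = ((1 - α') * α' ^ M / (M:ℝ) ^ M) * (n:ℝ) ^ (M + 1) := by
        rw [mul_pow]
        field_simp
        ring
      rw [h1]
      calc ((n:ℝ) - A.card) * (A.card : ℝ) ^ M / (M:ℝ) ^ M
          ≤ ((n:ℝ) - α' * n) * (α' * n) ^ M / (M:ℝ) ^ M :=
            div_le_div_of_nonneg_right hanti (by positivity)
        _ = ((1 - α') * α' ^ M / (M:ℝ) ^ M) * (n:ℝ) ^ (M + 1) := h2
        _ = (1 / K ^ (M + 1) - δ) * (n:ℝ) ^ (M + 1) := by rw [hδdef]; ring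
    have hT := turan_lower n (M + 1) (by omega)
    have hdiv : (n:ℝ) / K - 1 ≤ ((n / (M + 1) : ℕ) : ℝ) := by
      have h2 : n % (M + 1) < M + 1 := Nat.mod_lt n (by omega)
      have h1 := Nat.div_add_mod n (M + 1)
      have h4 := Nat.add_lt_add_left h2 ((M + 1) * (n / (M + 1)))
      rw [h1] at h4
      have h3 : (n:ℝ) < ((M + 1 : ℕ):ℝ) * ((n / (M + 1) : ℕ):ℝ) + ((M + 1 : ℕ):ℝ) := by
        exact_mod_cast h4
      rw [sub_le_iff_le_add, div_le_iff₀ hKpos]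
      push_cast at h3
      rw [hK]
      nlinarith [h3]
    have hge0 : (0:ℝ) ≤ (n:ℝ) / K - 1 := by
      rw [sub_nonneg, le_div_iff₀ hKpos]
      linarith
    have hT2 : ((n:ℝ) / K - 1) ^ (M + 1) ≤ (kCliqueCount (turanGraph n (M + 1)) (M + 1) : ℝ) :=
      le_trans (pow_le_pow_left₀ hge0 hdiv _) hT
    have hKn : K / (n:ℝ) ≤ 1 := by rw [div_le_one hn0]; linarith
    have hbern : 1 - ((M:ℝ) + 1) * (K / n) ≤ (1 - K / n) ^ (M + 1) := by
      have h := one_add_mul_le_pow (a := -(K / (n:ℝ))) (by linarith) (M + 1)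
      have e : (1 + -(K / (n:ℝ))) = 1 - K / n := by ring
      rw [e] at h
      calc 1 - ((M:ℝ) + 1) * (K / n) = 1 + ((M + 1 : ℕ):ℝ) * (-(K / n)) := by push_cast; ring
        _ ≤ _ := h
    have hfact : (n:ℝ) / K - 1 = ((n:ℝ) / K) * (1 - K / n) := by field_simp
    have hT3 : (1 / K ^ (M + 1)) * (n:ℝ) ^ (M + 1) - K * (n:ℝ) ^ M
        ≤ (kCliqueCount (turanGraph n (M + 1)) (M + 1) : ℝ) := by
      refine le_trans ?_ hT2
      rw [hfact, mul_pow]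
      have hnn : (0:ℝ) ≤ ((n:ℝ) / K) ^ (M + 1) := by positivity
      have h5 : ((n:ℝ) / K) ^ (M + 1) * (1 - ((M:ℝ) + 1) * (K / n))
          ≤ ((n:ℝ) / K) ^ (M + 1) * (1 - K / n) ^ (M + 1) :=
        mul_le_mul_of_nonneg_left hbern hnn
      refine le_trans ?_ h5
      have e2 : ((n:ℝ) / K) ^ (M + 1) * (1 - ((M:ℝ) + 1) * (K / n))
          = (1 / K ^ (M + 1)) * (n:ℝ) ^ (M + 1) - ((M:ℝ) + 1) * (n:ℝ) ^ M / K ^ M := by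
        rw [div_pow]
        field_simp
        ring
      rw [e2]
      have h7 : (1:ℝ) ≤ K ^ M := one_le_pow₀ hK1
      have h6 : ((M:ℝ) + 1) * (n:ℝ) ^ M / K ^ M ≤ K * (n:ℝ) ^ M := by
        rw [div_le_iff₀ (by positivity), ← hK]
        have h8 : (0:ℝ) ≤ (n:ℝ) ^ M := by positivity
        have h9 : (0:ℝ) ≤ K * (n:ℝ) ^ M := mul_nonneg hKpos.le h8
        have h10 := mul_le_mul_of_nonneg_left h7 h9
        linarith
      linarith
    have hfinal : K * (n:ℝ) ^ M ≤ (δ / 2) * (n:ℝ) ^ (M + 1) := by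
      have h10 : 2 * K / δ ≤ (n:ℝ) := le_trans hN₀ hnN₀
      have h8 : 2 * K ≤ δ * n := by
        rw [div_le_iff₀ hδpos] at h10; linarith
      have h9 : (n:ℝ) ^ (M + 1) = n * (n:ℝ) ^ M := by ring
      rw [h9]
      have h12 : (0:ℝ) ≤ (n:ℝ) ^ M := by positivity
      have h13 := mul_le_mul_of_nonneg_right h8 h12
      have h14 : (2 * K) * (n:ℝ) ^ M = 2 * (K * (n:ℝ) ^ M) := by ring
      have h15 : (δ * (n:ℝ)) * (n:ℝ) ^ M = δ * ((n:ℝ) * (n:ℝ) ^ M) := by ring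
      rw [h14, h15] at h13
      linarith
    calc (kCliqueCount G (M + 1) : ℝ) ≤ (1 / K ^ (M + 1) - δ) * (n:ℝ) ^ (M + 1) := hmain
      _ ≤ ((1 / K ^ (M + 1)) * (n:ℝ) ^ (M + 1) - K * (n:ℝ) ^ M) - (δ / 2) * (n:ℝ) ^ (M + 1) := by
          have h13 : (0:ℝ) ≤ (n:ℝ) ^ (M + 1) := by positivity
          nlinarith [hfinal]
      _ ≤ (kCliqueCount (turanGraph n (M + 1)) (M + 1) : ℝ) - (δ / 2) * (n:ℝ) ^ (M + 1) := by
          linarith [hT3]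
end

section
/- Let t, r, x be positive integers with x < r. The graph K_{t(r−x)−1} + T(n − t(r−x)+1, x) (the join of a clique on t(r−x)−1 vertices with the x-partite Turán graph on the remaining vertices) contains no t pairwise vertex-disjoint copies of K_r. -/
open SimpleGraph

/-- `G` contains no `t` pairwise vertex-disjoint copies of `K_r`. -/
def TKrFree {V : Type*} (G : SimpleGraph V) (t r : ℕ) : Prop :=
  ¬ ∃ f : Fin t → Finset V, (∀ i, G.IsNClique r (f i)) ∧
    ∀ i j : Fin t, i ≠ j → Disjoint (f i) (f j)

/-- The join `G + G'` of two graphs: all edges between the two vertex sets are added. -/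
def graphJoin {α β : Type*} (G : SimpleGraph α) (H : SimpleGraph β) : SimpleGraph (α ⊕ β) :=
  SimpleGraph.fromRel (fun x y =>
    match x, y with
    | Sum.inl a, Sum.inl b => G.Adj a b
    | Sum.inr a, Sum.inr b => H.Adj a b
    | _, _ => True)

lemma turan_clique_card {N x : ℕ} (hx : 1 ≤ x) (s : Finset (Fin N))
    (h : (turanGraph N x).IsClique s) : s.card ≤ x := by
  classical
  have : s.card ≤ (Finset.range x).card := by
    refine Finset.card_le_card_of_injOn (fun v => (v : ℕ) % x) (fun v _ => ?_) ?_
    · simp [Nat.mod_lt _ hx]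
    · intro a ha b hb hab
      by_contra hne
      exact (h ha hb hne) hab
  simpa using this

/-- Let t, r, x be positive integers with x < r. The graph
K_{t(r−x)−1} + T(n − t(r−x)+1, x) contains no t pairwise vertex-disjoint copies of K_r. -/
theorem join_turan_tKr_free (t r x n : ℕ) (ht : 1 ≤ t) (hx : 1 ≤ x) (hxr : x < r) :
    TKrFree (graphJoin (⊤ : SimpleGraph (Fin (t * (r - x) - 1)))
      (turanGraph (n - (t * (r - x) - 1)) x)) t r := by
  classical
  rintro ⟨f, hclique, hdisj⟩
  have hright : ∀ i, ((f i).toRight).card ≤ x := by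
    intro i
    refine turan_clique_card hx _ ?_
    intro a ha b hb hab
    have h1 : Sum.inr a ∈ f i := Finset.mem_toRight.mp ha
    have h2 : Sum.inr b ∈ f i := Finset.mem_toRight.mp hb
    have hadj := (hclique i).1 h1 h2 (fun hc => hab (Sum.inr.inj hc))
    simp only [graphJoin, fromRel_adj] at hadj
    rcases hadj.2 with h | h
    · exact h
    · exact (turanGraph _ x).adj_symm h
  have hleft : ∀ i, r - x ≤ ((f i).toLeft).card := by
    intro i
    have hcard : ((f i).toLeft).card + ((f i).toRight).card = r := by
      rw [Finset.card_toLeft_add_card_toRight]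
      exact (hclique i).2
    have := hright i
    omega
  -- sum of left cards ≤ m
  have hdisjL : ∀ i j : Fin t, i ≠ j → Disjoint ((f i).toLeft) ((f j).toLeft) := by
    intro i j hij
    have := hdisj i j hij
    rw [Finset.disjoint_left] at this ⊢
    intro a ha hb
    exact this (Finset.mem_toLeft.mp ha) (Finset.mem_toLeft.mp hb)
  have hsum : ∑ i : Fin t, ((f i).toLeft).card ≤ t * (r - x) - 1 := by
    have hbu : (Finset.univ.biUnion fun i : Fin t => (f i).toLeft).card
        = ∑ i : Fin t, ((f i).toLeft).card :=
      Finset.card_biUnion (fun i _ j _ hij => hdisjL i j hij)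
    calc ∑ i : Fin t, ((f i).toLeft).card
        = (Finset.univ.biUnion fun i : Fin t => (f i).toLeft).card := hbu.symm
      _ ≤ (Finset.univ : Finset (Fin (t * (r - x) - 1))).card := Finset.card_le_card (Finset.subset_univ _)
      _ = t * (r - x) - 1 := by simp
  have hlow : t * (r - x) ≤ ∑ i : Fin t, ((f i).toLeft).card := by
    calc t * (r - x) = ∑ _i : Fin t, (r - x) := by simp [mul_comm]
      _ ≤ ∑ i : Fin t, ((f i).toLeft).card := Finset.sum_le_sum fun i _ => hleft i
  have : 1 ≤ t * (r - x) := Nat.one_le_iff_ne_zero.mpr (Nat.mul_ne_zero (by omega) (by omega))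
  omega
end

section
/- Let s ≥ r ≥ 2, t ≥ 2 with tr > s, and x = ⌈(tr−s)/(t−1)⌉ − 1. Then ex(n, K_s, tK_r) = Θ(n^x): there exist positive constants c₁, c₂ such that for all sufficiently large n, c₁ n^x ≤ ex(n, K_s, tK_r) ≤ c₂ n^x, where ex(n,K_s,tK_r) is the maximum number of copies of K_s over n-vertex graphs with no t vertex-disjoint copies of K_r. -/
open SimpleGraph

open Finset

section Aux

lemma disjoint_or_cover {n : ℕ} (s : ℕ) :
    ∀ (m : ℕ) (F : Finset (Finset (Fin n))), (∀ S ∈ F, S.card = s) →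
    (∃ f : Fin m → Finset (Fin n), (∀ i, f i ∈ F) ∧
        ∀ i j, i ≠ j → Disjoint (f i) (f j)) ∨
    (∃ U : Finset (Fin n), U.card ≤ m * s ∧ ∀ S ∈ F, ¬ Disjoint S U) := by
  intro m
  induction m with
  | zero =>
    intro F _
    exact Or.inl ⟨fun i => i.elim0, fun i => i.elim0, fun i => i.elim0⟩
  | succ m ih =>
    intro F hF
    rcases F.eq_empty_or_nonempty with hFe | ⟨S₀, hS₀⟩
    · subst hFe
      exact Or.inr ⟨∅, by simp, by simp⟩
    · rcases ih (F.filter (fun S => Disjoint S S₀))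
        (fun S hS => hF S (mem_filter.mp hS).1) with ⟨f, hf, hdisj⟩ | ⟨U, hU, hhit⟩
      · left
        refine ⟨Fin.cons S₀ f, ?_, ?_⟩
        · intro i
          induction i using Fin.cases with
          | zero => simpa using hS₀
          | succ j => simpa using (mem_filter.mp (hf j)).1
        · intro i j hij
          induction i using Fin.cases with
          | zero =>
            induction j using Fin.cases with
            | zero => exact absurd rfl hij
            | succ j' => simpa using ((mem_filter.mp (hf j')).2).symm
          | succ i' =>
            induction j using Fin.cases with
            | zero => simpa using (mem_filter.mp (hf i')).2
            | succ j' =>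
              simpa using hdisj i' j' (fun h => hij (by rw [h]))
      · right
        refine ⟨U ∪ S₀, ?_, ?_⟩
        · calc (U ∪ S₀).card ≤ U.card + S₀.card := card_union_le _ _
            _ ≤ m * s + s := by rw [hF S₀ hS₀]; omega
            _ = (m + 1) * s := by ring
        · intro S hS
          by_cases hd : Disjoint S S₀
          · have := hhit S (mem_filter.mpr ⟨hS, hd⟩)
            exact fun h => this (h.mono_right subset_union_left)
          · exact fun h => hd (h.mono_right subset_union_right)

lemma sunflower_bound {n : ℕ} (hn : 1 ≤ n) (t k : ℕ) (ht : 2 ≤ t) :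
    ∀ (s : ℕ) (F : Finset (Finset (Fin n))),
    (∀ S ∈ F, S.card = s) →
    (∀ (C : Finset (Fin n)) (f : Fin t → Finset (Fin n)),
      Function.Injective f → (∀ i, f i ∈ F) →
      (∀ i j, i ≠ j → f i ∩ f j = C) → s ≤ C.card + k) →
    F.card ≤ (t * s + 1) ^ s * n ^ k := by
  intro s
  induction s with
  | zero =>
    intro F hc _
    have : F ⊆ {∅} := by
      intro S hS
      simp [card_eq_zero.mp (hc S hS)]
    calc F.card ≤ ({∅} : Finset (Finset (Fin n))).card := card_le_card this
      _ = 1 := card_singleton _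
      _ ≤ (t * 0 + 1) ^ 0 * n ^ k := by
        simpa using Nat.one_le_pow _ _ (by omega)
  | succ s' ih =>
    intro F hcard hsun
    by_cases hks : s' + 1 ≤ k
    · -- trivial bound
      have h1 : F ⊆ Finset.univ.powersetCard (s' + 1) := by
        intro S hS
        simp [Finset.mem_powersetCard_univ, hcard S hS]
      calc F.card ≤ (Finset.univ.powersetCard (s' + 1)).card := card_le_card h1
        _ = (Fintype.card (Fin n)).choose (s' + 1) := by
            rw [Finset.card_powersetCard, card_univ]
        _ = n.choose (s' + 1) := by rw [Fintype.card_fin]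
        _ ≤ n ^ (s' + 1) := Nat.choose_le_pow _ _
        _ ≤ n ^ k := Nat.pow_le_pow_right hn hks
        _ ≤ (t * (s' + 1) + 1) ^ (s' + 1) * n ^ k :=
            Nat.le_mul_of_pos_left _ (Nat.pow_pos (by omega))
    · push_neg at hks  -- k < s' + 1
      rcases disjoint_or_cover (s' + 1) t F hcard with ⟨f, hf, hdisj⟩ | ⟨U, hU, hhit⟩
      · -- t pairwise disjoint sets: sunflower with empty core, contradiction
        exfalso
        have hinj : Function.Injective f := by
          intro i j hij
          by_contra hne
          have h0 := hdisj i j hne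
          rw [hij, disjoint_self] at h0
          have := hcard (f j) (hf j)
          rw [h0] at this
          simp at this
        have := hsun ∅ f hinj hf (fun i j hij => by
          simpa [← Finset.disjoint_iff_inter_eq_empty] using hdisj i j hij)
        simp at this
        omega
      · -- cover case
        have hsub : F ⊆ U.biUnion (fun x => F.filter (fun S => x ∈ S)) := by
          intro S hS
          have := hhit S hS
          rw [Finset.not_disjoint_iff] at this
          obtain ⟨x, hxS, hxU⟩ := this
          exact Finset.mem_biUnion.mpr ⟨x, hxU, mem_filter.mpr ⟨hS, hxS⟩⟩
        have hx : ∀ x : Fin n, (F.filter (fun S => x ∈ S)).card ≤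
            (t * s' + 1) ^ s' * n ^ k := by
          intro x
          set Fx := (F.filter (fun S => x ∈ S)).image (fun S => S.erase x) with hFx
          have hinj2 : Set.InjOn (fun (S : Finset (Fin n)) => S.erase x) ↑(F.filter (fun S => x ∈ S)) := by
            intro a ha b hb hab
            have hxa : x ∈ a := (mem_filter.mp ha).2
            have hxb : x ∈ b := (mem_filter.mp hb).2
            have hab' : a.erase x = b.erase x := hab
            rw [← Finset.insert_erase hxa, ← Finset.insert_erase hxb, hab']
          have hcardeq : (F.filter (fun S => x ∈ S)).card = Fx.card :=
            (Finset.card_image_of_injOn hinj2).symm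
          rw [hcardeq]
          apply ih
          · intro S hS
            obtain ⟨a, ha, rfl⟩ := Finset.mem_image.mp hS
            rw [Finset.card_erase_of_mem (mem_filter.mp ha).2, hcard a (mem_filter.mp ha).1]
            omega
          · intro C f hfinj hfmem hfint
            have hx' : ∀ i, x ∉ f i := by
              intro i
              obtain ⟨a, _, ha⟩ := Finset.mem_image.mp (hfmem i)
              rw [← ha]
              exact Finset.notMem_erase _ _
            have key := hsun (insert x C) (fun i => insert x (f i)) ?_ ?_ ?_
            · have hxC : x ∉ C := by
                have h01 : (⟨0, by omega⟩ : Fin t) ≠ ⟨1, by omega⟩ := by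
                  intro h; simp [Fin.ext_iff] at h
                rw [← hfint ⟨0, by omega⟩ ⟨1, by omega⟩ h01]
                simp [Finset.mem_inter, hx' _]
              rw [Finset.card_insert_of_notMem hxC] at key
              omega
            · intro i j hij
              apply hfinj
              have h2 : (insert x (f i)).erase x = (insert x (f j)).erase x := by
                simp only at hij
                rw [hij]
              rwa [Finset.erase_insert (hx' i), Finset.erase_insert (hx' j)] at h2
            · intro i
              show insert x (f i) ∈ F
              obtain ⟨a, ha, haa⟩ := Finset.mem_image.mp (hfmem i)
              rw [← haa, Finset.insert_erase (mem_filter.mp ha).2]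
              exact (mem_filter.mp ha).1
            · intro i j hij
              show (insert x (f i)) ∩ (insert x (f j)) = insert x C
              have h3 : (insert x (f i)) ∩ (insert x (f j)) = insert x (f i ∩ f j) := by
                ext y; simp; tauto
              rw [h3, hfint i j hij]
        calc F.card ≤ (U.biUnion (fun x => F.filter (fun S => x ∈ S))).card := card_le_card hsub
          _ ≤ ∑ x ∈ U, (F.filter (fun S => x ∈ S)).card := Finset.card_biUnion_le
          _ ≤ ∑ _x ∈ U, (t * s' + 1) ^ s' * n ^ k := Finset.sum_le_sum (fun x _ => hx x)
          _ = U.card * ((t * s' + 1) ^ s' * n ^ k) := by rw [Finset.sum_const, smul_eq_mul]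
          _ ≤ (t * (s' + 1)) * ((t * s' + 1) ^ s' * n ^ k) := by
              apply Nat.mul_le_mul_right
              exact hU
          _ ≤ (t * (s' + 1) + 1) * ((t * (s' + 1) + 1) ^ s' * n ^ k) :=
              Nat.mul_le_mul (by omega) (Nat.mul_le_mul_right _
                (Nat.pow_le_pow_left (by
                  have := Nat.mul_le_mul_left t (Nat.le_succ s')
                  simp only [Nat.succ_eq_add_one] at this
                  omega) s'))
          _ = (t * (s' + 1) + 1) ^ (s' + 1) * n ^ k := by
              rw [pow_succ', mul_assoc]

lemma tkrfree_sunflower {n s r t q : ℕ} (G : SimpleGraph (Fin n)) (hG : TKrFree G t r)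
    (ht : 2 ≤ t) (hq1 : 1 ≤ q)
    (hkey : t * r ≤ s + (t - 1) * q) :
    ∀ (C : Finset (Fin n)) (f : Fin t → Finset (Fin n)),
      Function.Injective f → (∀ i, G.IsNClique s (f i)) →
      (∀ i j, i ≠ j → f i ∩ f j = C) → s ≤ C.card + (q - 1) := by
  intro C f hinj hcl hC
  by_contra hlt
  push_neg at hlt
  -- so C.card + q ≤ s
  have hcq : C.card + q ≤ s := by omega
  set c := C.card with hc
  have hCsub : ∀ i, C ⊆ f i := by
    intro i
    obtain ⟨j, hj⟩ : ∃ j : Fin t, j ≠ i := by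
      by_cases h0 : i = ⟨0, by omega⟩
      · refine ⟨⟨1, by omega⟩, ?_⟩
        rw [h0]; intro hh; simp [Fin.ext_iff] at hh
      · exact ⟨⟨0, by omega⟩, fun hh => h0 hh.symm⟩
    rw [← hC j i hj]
    exact inter_subset_right
  have hpet : ∀ i, ((f i) \ C).card = s - c := by
    intro i
    rw [card_sdiff_of_subset (hCsub i), (hcl i).2]
  set p := min r (s - c) with hp
  set d := r - p with hd
  have hdp : d + p = r := by omega
  have hps : p ≤ s - c := min_le_right _ _
  -- key cardinality inequality : t * d ≤ c
  have htd : t * d ≤ c := by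
    rcases le_or_gt r (s - c) with h | h
    · have : p = r := min_eq_left h
      simp [hd, this]
    · -- d = r - (s - c)
      have hpv : p = s - c := min_eq_right h.le
      have hcs : c + q ≤ s := hcq
      -- work in ℤ
      have hq' : (t : ℤ) * r ≤ (s : ℤ) + ((t : ℤ) - 1) * q := by
        have hk2 := hkey
        zify [show (1:ℕ) ≤ t from by omega] at hk2
        linarith
      have hcz : (c : ℤ) ≤ (s : ℤ) - q := by
        have := hcq; omega
      have hdz : (d : ℤ) = (r : ℤ) - ((s : ℤ) - c) := by
        rw [hd, hpv]
        omega
      have ht1 : (0 : ℤ) ≤ (t : ℤ) - 1 := by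
        have : (1 : ℤ) ≤ t := by exact_mod_cast (by omega : 1 ≤ t)
        omega
      have hmul : ((t : ℤ) - 1) * c ≤ ((t : ℤ) - 1) * ((s : ℤ) - q) :=
        mul_le_mul_of_nonneg_left hcz ht1
      have goal_z : (t : ℤ) * d ≤ c := by nlinarith [hdz, hmul, hq']
      exact_mod_cast goal_z
  -- get t disjoint d-subsets of C
  have hemb : Nonempty (Fin t × Fin d ↪ {v // v ∈ C}) := by
    apply Function.Embedding.nonempty_of_card_le
    simpa [Fintype.card_coe] using htd
  obtain ⟨e⟩ := hemb
  set D : Fin t → Finset (Fin n) := fun i => Finset.image (fun j => (e (i, j) : Fin n)) Finset.univ with hD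
  have hDsub : ∀ i, D i ⊆ C := by
    intro i v hv
    rw [hD] at hv
    obtain ⟨j, _, rfl⟩ := Finset.mem_image.mp hv
    exact (e (i, j)).2
  have hDcard : ∀ i, (D i).card = d := by
    intro i
    rw [hD]
    rw [Finset.card_image_of_injective _ (fun a b hab => by
      have := e.injective (Subtype.ext hab)
      simpa using this)]
    simp
  have hDdisj : ∀ i j, i ≠ j → Disjoint (D i) (D j) := by
    intro i j hij
    rw [Finset.disjoint_left]
    intro v hvi hvj
    obtain ⟨a, _, ha⟩ := Finset.mem_image.mp hvi
    obtain ⟨b, _, hb⟩ := Finset.mem_image.mp hvj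
    have : (i, a) = (j, b) := e.injective (Subtype.ext (ha.trans hb.symm))
    exact hij (congrArg Prod.fst this)
  -- petal subsets
  have hQ : ∀ i : Fin t, ∃ Q ⊆ (f i) \ C, Q.card = p := by
    intro i
    apply Finset.exists_subset_card_eq
    rw [hpet i]; exact hps
  choose Q hQsub hQcard using hQ
  -- build the t disjoint K_r's
  apply hG
  refine ⟨fun i => D i ∪ Q i, ?_, ?_⟩
  · intro i
    constructor
    · apply (hcl i).1.subset
      intro v hv
      rcases Finset.mem_union.mp hv with h | h
      · exact hCsub i (hDsub i h)
      · exact (Finset.mem_sdiff.mp (hQsub i h)).1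
    · have hdisjDQ : Disjoint (D i) (Q i) := by
        rw [Finset.disjoint_left]
        intro v hv hq
        exact (Finset.mem_sdiff.mp (hQsub i hq)).2 (hDsub i hv)
      rw [Finset.card_union_of_disjoint hdisjDQ, hDcard i, hQcard i, hdp]
  · intro i j hij
    rw [Finset.disjoint_left]
    intro v hv hv'
    rcases Finset.mem_union.mp hv with h | h <;> rcases Finset.mem_union.mp hv' with h' | h'
    · exact (Finset.disjoint_left.mp (hDdisj i j hij)) h h'
    · exact (Finset.mem_sdiff.mp (hQsub j h')).2 (hDsub i h)
    · exact (Finset.mem_sdiff.mp (hQsub i h)).2 (hDsub j h')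
    · have : v ∈ f i ∩ f j := Finset.mem_inter.mpr
        ⟨(Finset.mem_sdiff.mp (hQsub i h)).1, (Finset.mem_sdiff.mp (hQsub j h')).1⟩
      rw [hC i j hij] at this
      exact (Finset.mem_sdiff.mp (hQsub i h)).2 this

lemma arith_facts (s r t : ℕ) (hrs : r ≤ s) (hr : 2 ≤ r) (ht : 2 ≤ t)
    (hs : s < t * r) :
    let q := (t * r - s + t - 2) / (t - 1)
    1 ≤ q ∧ q ≤ r ∧ t * r ≤ s + (t - 1) * q ∧ s + 1 + (t - 1) * (q - 1) ≤ t * r := by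
  intro q
  have hb : 0 < t - 1 := by omega
  have hdm : (t-1) * q + (t * r - s + t - 2) % (t-1) = t * r - s + t - 2 :=
    Nat.div_add_mod (t * r - s + t - 2) (t - 1)
  have hmlt : (t * r - s + t - 2) % (t-1) < t - 1 := Nat.mod_lt _ hb
  have hq1 : 1 ≤ q := by
    rcases Nat.eq_zero_or_pos q with h | h
    · exfalso
      rw [h, Nat.mul_zero] at hdm
      omega
    · exact h
  have hB : (t-1) * (q-1) + (t-1) = (t-1) * q := by
    have : q - 1 + 1 = q := by omega
    calc (t-1) * (q-1) + (t-1) = (t-1) * ((q-1) + 1) := by ring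
      _ = (t-1) * q := by rw [this]
  have hD : (t-1) * r + r = t * r := by
    calc (t-1) * r + r = ((t-1) + 1) * r := by ring
      _ = t * r := by rw [Nat.sub_add_cancel (by omega : 1 ≤ t)]
  have hqr : q ≤ r := by
    by_contra hc
    push_neg at hc
    have hmono : (t - 1) * (r + 1) ≤ (t - 1) * q := Nat.mul_le_mul_left _ hc
    have hexp : (t-1) * (r+1) = (t-1)*r + (t-1) := by ring
    omega
  exact ⟨hq1, hqr, by omega, by omega⟩

lemma card_filter_lt (n k : ℕ) (h : k ≤ n) :
    (Finset.univ.filter (fun v : Fin n => v.val < k)).card = k := by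
  have he : Finset.univ.filter (fun v : Fin n => v.val < k)
      = (Finset.range k).attachFin (fun m hm => lt_of_lt_of_le (Finset.mem_range.mp hm) h) := by
    ext a
    simp [Finset.mem_attachFin]
  rw [he, Finset.card_attachFin, Finset.card_range]

lemma lower_construction_zero {n s r t : ℕ} (ht : 2 ≤ t) (hr : 2 ≤ r)
    (hs : s < t * r) (hsn : t * r ≤ n) :
    ∃ G : SimpleGraph (Fin n), TKrFree G t r ∧ 1 ≤ kCliqueCount G s := by
  set c := t * r - 1 with hc
  set G : SimpleGraph (Fin n) := SimpleGraph.fromRel (fun u v => u.val < c ∧ v.val < c) with hG0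
  refine ⟨G, ?_, ?_⟩
  · rintro ⟨f, hcl, hdisj⟩
    have hsub : ∀ i, f i ⊆ Finset.univ.filter (fun v : Fin n => v.val < c) := by
      intro i v hv
      obtain ⟨u, hu, hune⟩ := Finset.exists_mem_ne (by rw [(hcl i).2]; omega) v
      have hadj := (hcl i).1 hu hv hune
      rw [hG0, SimpleGraph.fromRel_adj] at hadj
      simp only [Finset.mem_filter, Finset.mem_univ, true_and]
      tauto
    have hcard : (Finset.univ.biUnion f).card = t * r := by
      rw [Finset.card_biUnion (fun i _ j _ hij => hdisj i j hij)]
      rw [Finset.sum_congr rfl (fun i _ => (hcl i).2), Finset.sum_const,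
        Finset.card_univ, Fintype.card_fin, smul_eq_mul]
    have hle : (Finset.univ.biUnion f).card ≤ c := by
      rw [← card_filter_lt n c (by omega)]
      apply Finset.card_le_card
      intro v hv
      obtain ⟨i, _, hvi⟩ := Finset.mem_biUnion.mp hv
      exact hsub i hvi
    omega
  · have hmem : (Finset.univ.filter (fun v : Fin n => v.val < s)) ∈
        {S : Finset (Fin n) | G.IsNClique s S} := by
      constructor
      · intro u hu v hv huv
        simp only [Finset.coe_filter, Set.mem_setOf_eq, Finset.mem_univ, true_and] at hu hv
        rw [hG0, SimpleGraph.fromRel_adj]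
        exact ⟨huv, Or.inl ⟨by omega, by omega⟩⟩
      · exact card_filter_lt n s (by omega)
    have hfin : {S : Finset (Fin n) | G.IsNClique s S}.Finite := Set.toFinite _
    rw [kCliqueCount]
    exact (Set.ncard_pos hfin).mpr ⟨_, hmem⟩


lemma lower_construction {n s r t x : ℕ} (ht : 2 ≤ t) (hx1 : 1 ≤ x) (hxr : x < r)
    (hsx : s - x + 1 ≤ t * (r - x)) (hxs : x ≤ s)
    (hn : 2 * (t * r) + 2 * s + 2 * x + 2 ≤ n) :
    ∃ G : SimpleGraph (Fin n), TKrFree G t r ∧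
      ∃ m : ℕ, n ≤ (2 * x + 2) * m ∧ m ^ x ≤ kCliqueCount G s := by
  have hP1 : 1 ≤ t * (r - x) := Nat.mul_pos (by omega) (by omega)
  have hPle : t * (r - x) ≤ t * r := Nat.mul_le_mul_left t (by omega)
  set c := t * (r - x) - 1 with hc
  have hcn : c + s + x + 1 ≤ n := by omega
  set m := (n - c) / x with hm
  have hdm : x * m + (n - c) % x = n - c := Nat.div_add_mod _ _
  have hmod : (n - c) % x < x := Nat.mod_lt _ (by omega)
  have hcm : c + x * m ≤ n := by omega
  have hnm : n ≤ (2 * x + 2) * m := by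
    have hexp : (2 * x + 2) * m = 2 * (x * m) + 2 * m := by ring
    omega
  -- the coloring
  set φ : Fin n → ℕ := fun v => if v.val < c then v.val else c + (v.val - c) % x with hφ
  have hφin : ∀ v : Fin n, v.val < c → φ v = v.val := by
    intro v hv; simp [hφ, hv]
  have hφout : ∀ v : Fin n, ¬ v.val < c → φ v = c + (v.val - c) % x := by
    intro v hv; simp [hφ, hv]
  have hφoutIco : ∀ v : Fin n, ¬ v.val < c → φ v ∈ Finset.Ico c (c + x) := by
    intro v hv
    rw [hφout v hv, Finset.mem_Ico]
    have := Nat.mod_lt (v.val - c) (show 0 < x by omega)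
    omega
  set G : SimpleGraph (Fin n) := SimpleGraph.fromRel (fun u v => φ u ≠ φ v) with hG0
  have hadj : ∀ u v : Fin n, G.Adj u v ↔ u ≠ v ∧ φ u ≠ φ v := by
    intro u v
    rw [hG0, SimpleGraph.fromRel_adj]
    constructor
    · rintro ⟨h1, h2 | h2⟩
      · exact ⟨h1, h2⟩
      · exact ⟨h1, fun hh => h2 hh.symm⟩
    · rintro ⟨h1, h2⟩; exact ⟨h1, Or.inl h2⟩
  have hinjOn : ∀ S : Finset (Fin n), G.IsClique S → Set.InjOn φ S := by
    intro S hS u hu v hv huv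
    by_contra hne
    exact (hadj u v).mp (hS hu hv hne) |>.2 huv
  refine ⟨G, ?_, m, hnm, ?_⟩
  · -- tKr-free
    rintro ⟨f, hcl, hdisj⟩
    have houter : ∀ i, ((f i).filter (fun v => ¬ v.val < c)).card ≤ x := by
      intro i
      calc ((f i).filter (fun v => ¬ v.val < c)).card ≤ (Finset.Ico c (c + x)).card := by
            apply Finset.card_le_card_of_injOn φ
            · intro v hv
              exact hφoutIco v (Finset.mem_filter.mp hv).2
            · intro a ha b hb hab
              exact hinjOn (f i) (hcl i).1 (Finset.mem_filter.mp ha).1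
                (Finset.mem_filter.mp hb).1 hab
        _ = x := by rw [Nat.card_Ico]; omega
    have hinner : ∀ i, r - x ≤ ((f i).filter (fun v => v.val < c)).card := by
      intro i
      have h1 := Finset.card_filter_add_card_filter_not
        (s := f i) (p := fun v => v.val < c)
      rw [(hcl i).2] at h1
      have h2 := houter i
      omega
    have hsum : t * (r - x) ≤
        ∑ i : Fin t, ((f i).filter (fun v => v.val < c)).card := by
      calc t * (r - x) = ∑ _i : Fin t, (r - x) := by
            rw [Finset.sum_const, Finset.card_univ, Fintype.card_fin, smul_eq_mul]
        _ ≤ _ := Finset.sum_le_sum (fun i _ => hinner i)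
    have hbi : ∑ i : Fin t, ((f i).filter (fun v => v.val < c)).card ≤ c := by
      calc ∑ i : Fin t, ((f i).filter (fun v => v.val < c)).card
          = (Finset.univ.biUnion (fun i => (f i).filter (fun v => v.val < c))).card :=
            (Finset.card_biUnion (fun i _ j _ hij =>
              Finset.disjoint_filter_filter (hdisj i j hij))).symm
        _ ≤ (Finset.univ.filter (fun v : Fin n => v.val < c)).card := by
            apply Finset.card_le_card
            intro v hv
            obtain ⟨i, _, hvi⟩ := Finset.mem_biUnion.mp hv
            simp only [Finset.mem_filter, Finset.mem_univ, true_and]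
            exact (Finset.mem_filter.mp hvi).2
        _ = c := card_filter_lt n c (by omega)
    omega
  · -- counting
    have hvb : ∀ (i : Fin x) (j : Fin m), c + x * j.val + i.val < n := by
      intro i j
      have h1 : x * j.val + x ≤ x * m := by
        calc x * j.val + x = x * (j.val + 1) := by ring
          _ ≤ x * m := Nat.mul_le_mul_left x (Nat.succ_le_of_lt j.2)
      have := i.2
      omega
    set vtx : Fin x → Fin m → Fin n := fun i j => ⟨c + x * j.val + i.val, hvb i j⟩ with hvtx
    have hval : ∀ (i : Fin x) (j : Fin m), (vtx i j).val = c + x * j.val + i.val :=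
      fun i j => rfl
    have hvtx_inj : ∀ (i i' : Fin x) (j j' : Fin m), vtx i j = vtx i' j' → i = i' ∧ j = j' := by
      intro i i' j j' he
      have h0 := congrArg Fin.val he
      rw [hval, hval] at h0
      have h2 : x * j.val + i.val = x * j'.val + i'.val := by omega
      have h3 : i.val = i'.val := by
        have h4 := congrArg (· % x) h2
        simpa [Nat.mul_add_mod, Nat.mod_eq_of_lt i.2, Nat.mod_eq_of_lt i'.2] using h4
      have h5 : j.val = j'.val := by
        have h6 : x * j.val = x * j'.val := by omega
        exact Nat.eq_of_mul_eq_mul_left (by omega) h6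
      exact ⟨Fin.ext h3, Fin.ext h5⟩
    have hφvtx : ∀ (i : Fin x) (j : Fin m), φ (vtx i j) = c + i.val := by
      intro i j
      rw [hφout _ (by rw [hval]; omega), hval]
      congr 1
      have h0 : c + x * j.val + i.val - c = x * j.val + i.val := by omega
      rw [h0, Nat.mul_add_mod, Nat.mod_eq_of_lt i.2]
    set coreS : Finset (Fin n) := Finset.univ.filter (fun v : Fin n => v.val < s - x)
      with hcoreS
    have hcoreS_card : coreS.card = s - x := card_filter_lt n (s - x) (by omega)
    have hcoreS_mem : ∀ v : Fin n, v ∈ coreS ↔ v.val < s - x := by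
      intro v; rw [hcoreS]; simp
    have hsxc : s - x ≤ c := by omega
    set SS : (Fin x → Fin m) → Finset (Fin n) :=
      fun g => coreS ∪ Finset.univ.image (fun i => vtx i (g i)) with hSS
    have hmemSS : ∀ g v, v ∈ SS g ↔ (v.val < s - x ∨ ∃ i, v = vtx i (g i)) := by
      intro g v
      rw [hSS]
      simp only [Finset.mem_union, Finset.mem_image, Finset.mem_univ, true_and]
      rw [hcoreS_mem]
      constructor
      · rintro (h | ⟨i, rfl⟩)
        · exact Or.inl h
        · exact Or.inr ⟨i, rfl⟩
      · rintro (h | ⟨i, rfl⟩)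
        · exact Or.inl h
        · exact Or.inr ⟨i, rfl⟩
    have hφSS : ∀ g v, v ∈ SS g → (v.val < s - x ∧ φ v = v.val) ∨
        (∃ i : Fin x, v = vtx i (g i) ∧ φ v = c + i.val) := by
      intro g v hv
      rcases (hmemSS g v).mp hv with h | ⟨i, rfl⟩
      · exact Or.inl ⟨h, hφin v (by omega)⟩
      · exact Or.inr ⟨i, rfl, hφvtx i (g i)⟩
    have hclSS : ∀ g, G.IsNClique s (SS g) := by
      intro g
      constructor
      · intro u hu v hv huv
        rw [hadj]
        refine ⟨huv, ?_⟩
        rcases hφSS g u (by exact_mod_cast hu) with ⟨hu1, hu2⟩ | ⟨i, rfl, hu2⟩ <;>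
          rcases hφSS g v (by exact_mod_cast hv) with ⟨hv1, hv2⟩ | ⟨j, rfl, hv2⟩
        · rw [hu2, hv2]
          exact fun hh => huv (Fin.ext hh)
        · rw [hu2, hv2]
          omega
        · rw [hu2, hv2]
          omega
        · rw [hu2, hv2]
          intro hh
          have hij : i = j := Fin.ext (by omega)
          exact huv (by rw [hij])
      · rw [hSS]
        have hdisj2 : Disjoint coreS (Finset.univ.image (fun i => vtx i (g i))) := by
          rw [Finset.disjoint_left]
          intro v hv hv'
          obtain ⟨i, _, rfl⟩ := Finset.mem_image.mp hv'
          have h7 := (hcoreS_mem _).mp hv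
          rw [hval] at h7
          omega
        rw [Finset.card_union_of_disjoint hdisj2]
        have h2 : (Finset.univ.image (fun i : Fin x => vtx i (g i))).card = x := by
          rw [Finset.card_image_of_injective _ ?_]
          · simp
          · intro a b hab
            have hab' : vtx a (g a) = vtx b (g b) := hab
            exact (hvtx_inj _ _ _ _ hab').1
        rw [hcoreS_card, h2]
        omega
    have hSSinj : Function.Injective SS := by
      intro g g' hgg
      funext i
      have hv : vtx i (g i) ∈ SS g' := by
        rw [← hgg]
        exact (hmemSS g _).mpr (Or.inr ⟨i, rfl⟩)
      rcases (hmemSS g' _).mp hv with h | ⟨i', he⟩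
      · rw [hval] at h
        omega
      · obtain ⟨h1, h2⟩ := hvtx_inj _ _ _ _ he
        subst h1
        rw [h2]
    have hfin : {S : Finset (Fin n) | G.IsNClique s S}.Finite := Set.toFinite _
    rw [kCliqueCount, Set.ncard_eq_toFinset_card _ hfin]
    calc m ^ x = Fintype.card (Fin x → Fin m) := by
          rw [Fintype.card_fun]; simp
      _ = (Finset.univ : Finset (Fin x → Fin m)).card := Finset.card_univ.symm
      _ ≤ (hfin.toFinset).card := by
          apply Finset.card_le_card_of_injOn SS
          · intro g _
            rw [Finset.mem_coe, Set.Finite.mem_toFinset]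
            exact hclSS g
          · exact hSSinj.injOn

lemma upper_bound {n s r t q : ℕ} (hn : 1 ≤ n) (ht : 2 ≤ t) (hq1 : 1 ≤ q)
    (hkey : t * r ≤ s + (t - 1) * q)
    (G : SimpleGraph (Fin n)) (hG : TKrFree G t r) :
    kCliqueCount G s ≤ (t * s + 1) ^ s * n ^ (q - 1) := by
  have hfin : {S : Finset (Fin n) | G.IsNClique s S}.Finite := Set.toFinite _
  rw [kCliqueCount, Set.ncard_eq_toFinset_card _ hfin]
  apply sunflower_bound hn t (q-1) ht s
  · intro S hS
    exact (hfin.mem_toFinset.mp hS).2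
  · intro C f hinj hmem hint
    exact tkrfree_sunflower G hG ht hq1 hkey C f hinj
      (fun i => hfin.mem_toFinset.mp (hmem i)) hint

end Aux

/-- Let s ≥ r ≥ 2, t ≥ 2 with tr > s, and x = ⌈(tr−s)/(t−1)⌉ − 1. Then
ex(n, K_s, tK_r) = Θ(n^x): there exist positive constants c₁, c₂ such that for all
sufficiently large n, c₁ n^x ≤ ex(n, K_s, tK_r) ≤ c₂ n^x, where ex(n,K_s,tK_r) is the
maximum number of copies of K_s over n-vertex graphs with no t vertex-disjoint copies of K_r. -/
theorem ex_Ks_tKr_order (s r t : ℕ) (hrs : r ≤ s) (hr : 2 ≤ r) (ht : 2 ≤ t)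
    (hs : s < t * r) (x : ℕ) (hx : x = (t * r - s + t - 2) / (t - 1) - 1) :
    ∃ c₁ c₂ : ℝ, 0 < c₁ ∧ 0 < c₂ ∧ ∃ N : ℕ, ∀ n ≥ N,
      (∃ G : SimpleGraph (Fin n), TKrFree G t r ∧
        c₁ * (n : ℝ) ^ x ≤ (kCliqueCount G s : ℝ)) ∧
      (∀ G : SimpleGraph (Fin n), TKrFree G t r →
        (kCliqueCount G s : ℝ) ≤ c₂ * (n : ℝ) ^ x) := by
  obtain ⟨hq1, hqr, hkey, hmin⟩ := arith_facts s r t hrs hr ht hs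
  set q := (t * r - s + t - 2) / (t - 1) with hq
  have hxq : x = q - 1 := hx
  refine ⟨((2 * x + 2 : ℝ) ^ x)⁻¹, ((t * s + 1 : ℕ) ^ s : ℝ), ?_, ?_,
    2 * (t * r) + 2 * s + 2 * x + 2, ?_⟩
  · apply inv_pos.mpr
    apply pow_pos
    positivity
  · have : (0 : ℕ) < (t * s + 1) ^ s := Nat.pow_pos (by omega)
    exact_mod_cast this
  · intro n hn
    have hn1 : 1 ≤ n := by omega
    constructor
    · -- lower bound
      rcases Nat.eq_zero_or_pos x with hx0 | hx1
      · obtain ⟨G, hfree, hcount⟩ := lower_construction_zero (n := n) ht hr hs (by omega)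
        refine ⟨G, hfree, ?_⟩
        rw [hx0]
        simp
        exact_mod_cast hcount
      · -- x ≥ 1
        have hxr : x < r := by omega
        have htx : t * (r - x) + t * x = t * r := by
          rw [← Nat.mul_add]
          congr 1
          omega
        have htx2 : (t - 1) * x + x = t * x := by
          calc (t - 1) * x + x = ((t - 1) + 1) * x := by ring
            _ = t * x := by rw [Nat.sub_add_cancel (by omega : 1 ≤ t)]
        have hmin' := hmin
        rw [← hxq] at hmin'
        have hsx : s - x + 1 ≤ t * (r - x) := by omega
        obtain ⟨G, hfree, m, hnm, hcount⟩ :=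
          lower_construction (n := n) ht hx1 hxr hsx (by omega) (by omega)
        refine ⟨G, hfree, ?_⟩
        have hb0 : (0 : ℝ) < (2 * (x : ℝ) + 2) ^ x := by positivity
        rw [inv_mul_le_iff₀ hb0]
        calc (n : ℝ) ^ x ≤ ((2 * (x : ℝ) + 2) * m) ^ x := by
              apply pow_le_pow_left₀ (by positivity)
              have : (n : ℝ) ≤ ((2 * x + 2) * m : ℕ) := by exact_mod_cast hnm
              push_cast at this
              linarith
          _ = (2 * (x : ℝ) + 2) ^ x * (m : ℝ) ^ x := mul_pow _ _ _
          _ ≤ (2 * (x : ℝ) + 2) ^ x * (kCliqueCount G s : ℝ) := by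
              apply mul_le_mul_of_nonneg_left _ (le_of_lt hb0)
              have : ((m ^ x : ℕ) : ℝ) ≤ (kCliqueCount G s : ℝ) := by exact_mod_cast hcount
              push_cast at this
              linarith
    · -- upper bound
      intro G hG
      have hup := upper_bound hn1 ht hq1 hkey G hG
      have hcast : ((kCliqueCount G s : ℕ) : ℝ) ≤ (((t * s + 1) ^ s * n ^ (q - 1) : ℕ) : ℝ) := by
        exact_mod_cast hup
      rw [← hxq] at hcast
      push_cast at hcast ⊢
      linarith
end

section
/- Let t, r, x be positive integers with x < r, and let 𝒯 be a K_{x+1}^p-free p-uniform hypergraph. Then the p-uniform hypergraph K_{t(r−x)−1}^p + 𝒯 (obtained by adding a set C of t(r−x)−1 new vertices, all p-subsets of C, and all p-sets meeting both C and V(𝒯)) contains no t pairwise vertex-disjoint copies of K_r^p. -/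
/-- `S` spans a copy of `K_k^p` in the hypergraph with hyperedge set `E`. -/
def IsHClique {V : Type*} (E : Set (Finset V)) (p k : ℕ) (S : Finset V) : Prop :=
  S.card = k ∧ ∀ e ⊆ S, e.card = p → e ∈ E

/-- The hypergraph with hyperedge set `E` has no `t` pairwise vertex-disjoint copies
of `K_r^p`. -/
def HTKrFree {V : Type*} (E : Set (Finset V)) (t p r : ℕ) : Prop :=
  ¬ ∃ f : Fin t → Finset V, (∀ i, IsHClique E p r (f i)) ∧
    ∀ i j : Fin t, i ≠ j → Disjoint (f i) (f j)

/-- The hyperedge set of the join `K_c^p + 𝒯` on `Fin c ⊕ β`: all `p`-subsets of the new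
clique side, the hyperedges of `𝒯`, and all `p`-sets meeting both sides. -/
def hJoinEdges {β : Type*} [DecidableEq β] (c p : ℕ) (E : Set (Finset β)) :
    Set (Finset (Fin c ⊕ β)) :=
  {e | e.card = p ∧ ((∀ v ∈ e, v.isLeft = true) ∨
    (∃ e₀ ∈ E, e = e₀.image Sum.inr) ∨
    ((∃ v ∈ e, v.isLeft = true) ∧ (∃ v ∈ e, v.isRight = true)))}

/-!
A copy of `K_r^p` in `K_c^p + 𝒯` meets `V(𝒯)` in a clique of `𝒯`, hence in at most `x` vertices,
so it uses at least `r - x` of the `c` new vertices. Then `t` disjoint copies need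
`t (r - x) > c` new vertices.
-/

open Finset Function

lemma IsHClique.exists_subset {V : Type*} {E : Set (Finset V)} {p k m : ℕ} {S : Finset V}
    (hS : IsHClique E p k S) (hm : m ≤ k) : ∃ T ⊆ S, IsHClique E p m T := by
  obtain ⟨T, hTS, hT⟩ := exists_subset_card_eq (hS.1.symm ▸ hm : m ≤ #S)
  exact ⟨T, hTS, hT, fun e heT he => hS.2 e (heT.trans hTS) he⟩

lemma IsHClique.le_of_not_exists_isHClique {V : Type*} {E : Set (Finset V)} {p k x : ℕ}
    {S : Finset V} (hS : IsHClique E p k S) (hfree : ¬ ∃ T, IsHClique E p (x + 1) T) :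
    k ≤ x := by
  by_contra! h
  obtain ⟨T, -, hT⟩ := hS.exists_subset h
  exact hfree ⟨T, hT⟩

lemma card_mul_le_card_of_pairwise_disjoint {ι α : Type*} [Fintype ι] [Fintype α]
    [DecidableEq α] {f : ι → Finset α} (hf : Pairwise (Disjoint on f)) {m : ℕ}
    (hm : ∀ i, m ≤ #(f i)) : Fintype.card ι * m ≤ Fintype.card α :=
  calc Fintype.card ι * m = ∑ _i : ι, m := by simp
    _ ≤ ∑ i, #(f i) := sum_le_sum fun i _ => hm i
    _ = #(univ.biUnion f) := (card_biUnion fun i _ j _ hij => hf hij).symm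
    _ ≤ Fintype.card α := card_le_univ _

lemma Finset.disjoint_toLeft {α β : Type*} {u v : Finset (α ⊕ β)} (h : Disjoint u v) :
    Disjoint u.toLeft v.toLeft :=
  disjoint_left.2 fun _ ha hb => disjoint_left.1 h (mem_toLeft.1 ha) (mem_toLeft.1 hb)

section hJoinEdges

variable {β : Type*} [DecidableEq β] {c p : ℕ} {E : Set (Finset β)}

lemma mem_of_image_inr_mem_hJoinEdges {e : Finset β} (he : e.Nonempty)
    (h : e.image Sum.inr ∈ hJoinEdges c p E) : e ∈ E := by
  obtain ⟨-, hleft | ⟨e₀, he₀, heq⟩ | ⟨⟨v, hv, hvl⟩, -⟩⟩ := h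
  · obtain ⟨b, hb⟩ := he
    simpa using hleft (.inr b) (mem_image_of_mem _ hb)
  · rwa [image_injective Sum.inr_injective heq]
  · obtain ⟨b, -, rfl⟩ := mem_image.1 hv
    simp at hvl

lemma IsHClique.card_toRight_le {k x : ℕ} {S : Finset (Fin c ⊕ β)} (hp : 1 ≤ p)
    (hS : IsHClique (hJoinEdges c p E) p k S) (hfree : ¬ ∃ T, IsHClique E p (x + 1) T) :
    #S.toRight ≤ x := by
  refine IsHClique.le_of_not_exists_isHClique ⟨rfl, fun e heS he => ?_⟩ hfree
  have himage : #(e.image Sum.inr : Finset (Fin c ⊕ β)) = p := by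
    rw [card_image_of_injective _ Sum.inr_injective, he]
  refine mem_of_image_inr_mem_hJoinEdges (card_pos.1 (by omega)) (hS.2 _ ?_ himage)
  exact image_subset_iff.2 fun b hb => mem_toRight.1 (heS hb)

lemma IsHClique.sub_le_card_toLeft {r x : ℕ} {S : Finset (Fin c ⊕ β)} (hp : 1 ≤ p)
    (hS : IsHClique (hJoinEdges c p E) p r S) (hfree : ¬ ∃ T, IsHClique E p (x + 1) T) :
    r - x ≤ #S.toLeft := by
  have := hS.card_toRight_le hp hfree
  have := card_toLeft_add_card_toRight (u := S)
  have := hS.1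
  omega

end hJoinEdges

theorem hJoin_tKrp_free_general {β : Type*} [DecidableEq β] (p t r x : ℕ)
    (hp : 1 ≤ p) (ht : 1 ≤ t) (hxr : x < r)
    (E : Set (Finset β))
    (hfree : ¬ ∃ S : Finset β, IsHClique E p (x + 1) S) :
    HTKrFree (hJoinEdges (t * (r - x) - 1) p E) t p r := by
  rintro ⟨f, hcl, hdisj⟩
  have hcount := card_mul_le_card_of_pairwise_disjoint (f := fun i => (f i).toLeft)
    (fun i j hij => disjoint_toLeft (hdisj i j hij)) fun i => (hcl i).sub_le_card_toLeft hp hfree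
  simp only [Fintype.card_fin] at hcount
  have : t ≤ t * (r - x) := Nat.le_mul_of_pos_right t (by omega)
  omega

/-- Let t, r, x be positive integers with x < r, and let 𝒯 be a
K_{x+1}^p-free p-uniform hypergraph. Then the p-uniform hypergraph K_{t(r−x)−1}^p + 𝒯
contains no t pairwise vertex-disjoint copies of K_r^p. -/
theorem hJoin_tKrp_free {β : Type*} [DecidableEq β] (p t r x : ℕ)
    (hp : 1 ≤ p) (ht : 1 ≤ t) (hx : 1 ≤ x) (hxr : x < r)
    (E : Set (Finset β)) (hunif : ∀ e ∈ E, e.card = p)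
    (hfree : ¬ ∃ S : Finset β, IsHClique E p (x + 1) S) :
    HTKrFree (hJoinEdges (t * (r - x) - 1) p E) t p r :=
  hJoin_tKrp_free_general p t r x hp ht hxr E hfree
end

section
/- For every p-uniform hypergraph H and integers t ≥ 1, r ≥ p, we have ex(n, H, tK_r^p) = O(n^{b(H)}): there is a constant C such that every n-vertex p-graph with no t pairwise vertex-disjoint copies of K_r^p contains at most C·n^{b(H)} copies of H, where b(H) is the largest size of a set U ⊆ V(H) such that no partial (t,U)-blowup of H contains tK_r^p. -/
/-- Vertex set of the partial `(m,U)`-blowup: each vertex of `U` gets `m` copies, every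
other vertex only its copy of index `0`. -/
def BlowupVertex {W : Type*} (U : Finset W) (m : ℕ) : Type _ :=
  {v : W × Fin m // v.1 ∈ U ∨ (v.2 : ℕ) = 0}

/-- Hyperedges of the partial `(m,U)`-blowup of the hypergraph with hyperedge set `EH`:
for each original hyperedge, all ways of choosing one copy of each of its vertices. -/
def blowupEdges {W : Type*} [DecidableEq W] (EH : Set (Finset W)) (U : Finset W) (m : ℕ) :
    Set (Finset (BlowupVertex U m)) :=
  {e' | ∃ e ∈ EH, e'.image (fun v => v.1.1) = e ∧ e'.card = e.card}

/-- The number of (labeled) copies of the hypergraph `EH` in the hypergraph `EG`. -/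
noncomputable def hCopyCount {W V : Type*} [DecidableEq V]
    (EH : Set (Finset W)) (EG : Set (Finset V)) : ℕ :=
  Nat.card {f : W → V // Function.Injective f ∧ ∀ e ∈ EH, e.image f ∈ EG}



open Finset

section Sunflower
variable {V : Type*} [DecidableEq V]

/-- Bound for the Erdős–Rado sunflower lemma. -/
def sfBound : ℕ → ℕ → ℕ
  | 0, _ => 1
  | (a+1), m => (m-1)*(a+1)*(sfBound a m) + 1

lemma sfBound_pos (a m : ℕ) : 1 ≤ sfBound a m := by
  cases a <;> simp [sfBound]

lemma sunflower_lemma (m : ℕ) : ∀ (a : ℕ) (𝒜 : Finset (Finset V)),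
    (∀ A ∈ 𝒜, A.card ≤ a) → sfBound a m < 𝒜.card →
    ∃ Y : Finset V, ∃ 𝒮 ⊆ 𝒜, 𝒮.card = m ∧
      ∀ A ∈ 𝒮, ∀ B ∈ 𝒮, A ≠ B → A ∩ B = Y := by
  intro a
  induction a with
  | zero =>
    intro 𝒜 hcard hbig
    exfalso
    have h1 : 𝒜.card ≤ 1 := by
      refine Finset.card_le_one.2 ?_
      intro A hA B hB
      have : A = ∅ := Finset.card_eq_zero.1 (Nat.le_zero.1 (hcard A hA))
      have hB' : B = ∅ := Finset.card_eq_zero.1 (Nat.le_zero.1 (hcard B hB))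
      rw [this, hB']
    simp [sfBound] at hbig; omega
  | succ a ih =>
    intro 𝒜 hcard hbig
    classical
    -- m = 0 or 1 easy cases
    rcases Nat.lt_or_ge m 2 with hm | hm
    · interval_cases m
      · exact ⟨∅, ∅, by simp⟩
      · have : 𝒜.Nonempty := by
          rw [← Finset.card_pos]; have := sfBound_pos (a+1) 1; omega
        obtain ⟨A, hA⟩ := this
        exact ⟨∅, {A}, by simpa using hA, by simp, by simp⟩
    -- maximal pairwise disjoint subfamily
    set P := 𝒜.powerset.filter (fun 𝒮 => ∀ A ∈ 𝒮, ∀ B ∈ 𝒮, A ≠ B → A ∩ B = ∅) with hP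
    have hPne : P.Nonempty := ⟨∅, by simp [hP]⟩
    obtain ⟨𝒟, h𝒟P, h𝒟max⟩ := Finset.exists_max_image P Finset.card hPne
    have h𝒟A : 𝒟 ⊆ 𝒜 := Finset.mem_powerset.1 (Finset.mem_filter.1 h𝒟P).1
    have h𝒟dis : ∀ A ∈ 𝒟, ∀ B ∈ 𝒟, A ≠ B → A ∩ B = ∅ := (Finset.mem_filter.1 h𝒟P).2
    rcases le_or_gt m 𝒟.card with hge | hlt
    · obtain ⟨𝒮, h𝒮sub, h𝒮card⟩ := Finset.exists_subset_card_eq hge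
      exact ⟨∅, 𝒮, h𝒮sub.trans h𝒟A, h𝒮card,
        fun A hA B hB hAB => h𝒟dis A (h𝒮sub hA) B (h𝒮sub hB) hAB⟩
    · set Uu := 𝒟.biUnion id with hUu
      have hUcard : Uu.card ≤ (m-1)*(a+1) := by
        calc Uu.card ≤ ∑ A ∈ 𝒟, A.card := Finset.card_biUnion_le
        _ ≤ 𝒟.card * (a+1) := Finset.sum_le_card_nsmul _ _ _ (fun A hA => hcard A (h𝒟A hA))
        _ ≤ (m-1)*(a+1) := by
            have : 𝒟.card ≤ m - 1 := by omega
            exact Nat.mul_le_mul_right _ this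
      -- every nonempty member meets Uu
      have hmeet : ∀ A ∈ 𝒜, A ≠ ∅ → (A ∩ Uu).Nonempty := by
        intro A hA hAne
        by_contra hcon
        have hAU : A ∩ Uu = ∅ := Finset.not_nonempty_iff_eq_empty.1 hcon
        have hAnotD : A ∉ 𝒟 := by
          intro hAD
          have : A ⊆ Uu := fun x hx => Finset.mem_biUnion.2 ⟨A, hAD, hx⟩
          have : A ∩ Uu = A := Finset.inter_eq_left.2 this
          rw [hAU] at this; exact hAne this.symm
        have hins : insert A 𝒟 ∈ P := by
          rw [hP, Finset.mem_filter, Finset.mem_powerset]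
          constructor
          · exact Finset.insert_subset hA h𝒟A
          · intro B hB C hC hBC
            have key : ∀ D ∈ 𝒟, A ∩ D = ∅ := by
              intro D hD
              have hDU : D ⊆ Uu := fun y hy => Finset.mem_biUnion.2 ⟨D, hD, hy⟩
              refine Finset.eq_empty_of_forall_notMem (fun y hy => ?_)
              have hym := Finset.mem_inter.1 hy
              have : y ∈ A ∩ Uu := Finset.mem_inter.2 ⟨hym.1, hDU hym.2⟩
              rw [hAU] at this; exact absurd this (Finset.notMem_empty y)
            rcases Finset.mem_insert.1 hB with rfl | hB'
            · rcases Finset.mem_insert.1 hC with rfl | hC'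
              · exact absurd rfl hBC
              · exact key C hC'
            · rcases Finset.mem_insert.1 hC with rfl | hC'
              · rw [Finset.inter_comm]; exact key B hB'
              · exact h𝒟dis B hB' C hC' hBC
        have := h𝒟max _ hins
        rw [Finset.card_insert_of_notMem hAnotD] at this
        omega
      -- pigeonhole: some x is in many members
      have hbig2 : (m-1)*(a+1)*(sfBound a m) + 1 < 𝒜.card := by
        simpa [sfBound] using hbig
      have hcover : 𝒜.filter (fun A => A ≠ ∅) ⊆ Uu.biUnion (fun x => 𝒜.filter (fun A => x ∈ A)) := by
        intro A hA
        obtain ⟨hA𝒜, hAne⟩ := Finset.mem_filter.1 hA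
        obtain ⟨x, hx⟩ := hmeet A hA𝒜 hAne
        obtain ⟨hxA, hxU⟩ := Finset.mem_inter.1 hx
        exact Finset.mem_biUnion.2 ⟨x, hxU, Finset.mem_filter.2 ⟨hA𝒜, hxA⟩⟩
      have hfiltercard : 𝒜.card - 1 ≤ (𝒜.filter (fun A => A ≠ ∅)).card := by
        have : 𝒜 ⊆ insert ∅ (𝒜.filter (fun A => A ≠ ∅)) := by
          intro A hA
          by_cases hAe : A = ∅
          · simp [hAe]
          · exact Finset.mem_insert.2 (Or.inr (Finset.mem_filter.2 ⟨hA, hAe⟩))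
        have := Finset.card_le_card this
        have h2 := Finset.card_insert_le (∅ : Finset V) (𝒜.filter (fun A => A ≠ ∅))
        omega
      have hex : ∃ x, sfBound a m < (𝒜.filter (fun A => x ∈ A)).card := by
        by_contra hcon
        push_neg at hcon
        have hsum : (𝒜.filter (fun A => A ≠ ∅)).card ≤ ∑ x ∈ Uu, (𝒜.filter (fun A => x ∈ A)).card :=
          (Finset.card_le_card hcover).trans Finset.card_biUnion_le
        have : ∑ x ∈ Uu, (𝒜.filter (fun A => x ∈ A)).card ≤ Uu.card * sfBound a m :=
          Finset.sum_le_card_nsmul _ _ _ (fun x _ => hcon x)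
        have hUb : Uu.card * sfBound a m ≤ (m-1)*(a+1)*sfBound a m :=
          Nat.mul_le_mul_right _ hUcard
        omega
      obtain ⟨x, hx⟩ := hex
      set 𝒜x := (𝒜.filter (fun A => x ∈ A)).image (fun A => A.erase x) with h𝒜x
      have hinj : Set.InjOn (fun A : Finset V => A.erase x) ↑(𝒜.filter (fun A => x ∈ A)) := by
        intro A hA B hB hAB
        have hxA : x ∈ A := (Finset.mem_filter.1 (Finset.mem_coe.1 hA)).2
        have hxB : x ∈ B := (Finset.mem_filter.1 (Finset.mem_coe.1 hB)).2
        have h2 : insert x (A.erase x) = insert x (B.erase x) := congrArg (insert x) hAB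
        rwa [Finset.insert_erase hxA, Finset.insert_erase hxB] at h2
      have h𝒜xcard : sfBound a m < 𝒜x.card := by
        rw [h𝒜x, Finset.card_image_of_injOn hinj]; exact hx
      have h𝒜xle : ∀ B ∈ 𝒜x, B.card ≤ a := by
        intro B hB
        obtain ⟨A, hA, rfl⟩ := Finset.mem_image.1 hB
        obtain ⟨hA𝒜, hxA⟩ := Finset.mem_filter.1 hA
        have := Finset.card_erase_of_mem hxA
        have := hcard A hA𝒜
        omega
      obtain ⟨Y', 𝒮', h𝒮'sub, h𝒮'card, h𝒮'sf⟩ := ih 𝒜x h𝒜xle h𝒜xcard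
      have hxnot : ∀ B ∈ 𝒮', x ∉ B := by
        intro B hB
        obtain ⟨A, _, rfl⟩ := Finset.mem_image.1 (h𝒮'sub hB)
        exact Finset.notMem_erase x A
      have hinsinj : Set.InjOn (fun B : Finset V => insert x B) ↑𝒮' := by
        intro B hB C hC hBC
        have h2 : (insert x B).erase x = (insert x C).erase x := congrArg (fun D => Finset.erase D x) hBC
        rwa [Finset.erase_insert (hxnot B (Finset.mem_coe.1 hB)),
          Finset.erase_insert (hxnot C (Finset.mem_coe.1 hC))] at h2
      refine ⟨insert x Y', 𝒮'.image (insert x), ?_, ?_, ?_⟩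
      · intro A hA
        obtain ⟨B, hB, rfl⟩ := Finset.mem_image.1 hA
        obtain ⟨A', hA', hA'e⟩ := Finset.mem_image.1 (h𝒮'sub hB)
        have hxA' : x ∈ A' := (Finset.mem_filter.1 hA').2
        rw [← hA'e, Finset.insert_erase hxA']
        exact (Finset.mem_filter.1 hA').1
      · rw [Finset.card_image_of_injOn hinsinj]; exact h𝒮'card
      · intro A hA B hB hAB
        obtain ⟨A', hA', rfl⟩ := Finset.mem_image.1 hA
        obtain ⟨B', hB', rfl⟩ := Finset.mem_image.1 hB
        have hA'B' : A' ≠ B' := fun h => hAB (by rw [h])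
        have := h𝒮'sf A' hA' B' hB' hA'B'
        ext y
        simp only [Finset.mem_inter, Finset.mem_insert]
        constructor
        · rintro ⟨hy1, hy2⟩
          rcases hy1 with rfl | hy1
          · exact Or.inl rfl
          · rcases hy2 with rfl | hy2
            · exact Or.inl rfl
            · right; rw [← this]; exact Finset.mem_inter.2 ⟨hy1, hy2⟩
        · rintro (rfl | hy)
          · exact ⟨Or.inl rfl, Or.inl rfl⟩
          · rw [← this] at hy
            have := Finset.mem_inter.1 hy
            exact ⟨Or.inr this.1, Or.inr this.2⟩
end Sunflower

section Chains
variable {V : Type*} [DecidableEq V]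

/-- Union of all cliques used before step `s`. -/
def tkrOlder {t : ℕ} (𝒟 : ℕ → Fin t → Finset V) (s : ℕ) : Finset V :=
  (Finset.range s).biUnion (fun s' => Finset.univ.biUnion (𝒟 s'))

/-- A chain of configurations of `t` cliques, each pairwise intersecting only in
fresh vertices. -/
def TkrChain (EG : Set (Finset V)) (p t r N : ℕ) (𝒟 : ℕ → Fin t → Finset V) : Prop :=
  ∀ s < N, (∀ i, IsHClique EG p r (𝒟 s i)) ∧
    ∀ i j : Fin t, i ≠ j → 𝒟 s i ∩ 𝒟 s j ∩ tkrOlder 𝒟 s = ∅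

/-- Sunflower-size parameter. -/
def tkrM (t r : ℕ) : ℕ := t + t * (2^(t*r))^t + 1

/-- Bound on chain length. -/
def tkrN0 (t r : ℕ) : ℕ := sfBound (t*r) (tkrM t r)

lemma tkrChain_bound {EG : Set (Finset V)} {p t r : ℕ} (ht : 1 ≤ t)
    (hfree : HTKrFree EG t p r) (N : ℕ) (𝒟 : ℕ → Fin t → Finset V)
    (hchain : TkrChain EG p t r N 𝒟) : N ≤ tkrN0 t r := by
  classical
  by_contra hbig
  push_neg at hbig
  set K : ℕ → Finset V := fun s => Finset.univ.biUnion (𝒟 s) with hK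
  have hKsub : ∀ s, ∀ i, 𝒟 s i ⊆ K s := by
    intro s i x hx
    exact Finset.mem_biUnion.2 ⟨i, Finset.mem_univ i, hx⟩
  have hKold : ∀ s' s : ℕ, s' < s → K s' ⊆ tkrOlder 𝒟 s := by
    intro s' s hss x hx
    exact Finset.mem_biUnion.2 ⟨s', Finset.mem_range.2 hss, hx⟩
  have hKcard : ∀ s < N, (K s).card ≤ t*r := by
    intro s hs
    calc (K s).card ≤ ∑ i : Fin t, (𝒟 s i).card := Finset.card_biUnion_le
    _ ≤ Finset.univ.card * r := Finset.sum_le_card_nsmul _ _ _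
        (fun i _ => le_of_eq ((hchain s hs).1 i).1)
    _ = t * r := by simp
  have hKinj : ∀ s1 ∈ Finset.range N, ∀ s2 ∈ Finset.range N, K s1 = K s2 → s1 = s2 := by
    have main : ∀ s1 s2, s1 < s2 → s2 < N → K s1 = K s2 → False := by
      intro s1 s2 h12 h2N hKeq
      refine hfree ⟨𝒟 s2, fun i => (hchain s2 h2N).1 i, ?_⟩
      intro i j hij
      rw [Finset.disjoint_left]
      intro x hxi hxj
      have hxK : x ∈ K s1 := by rw [hKeq]; exact hKsub s2 i hxi
      have : x ∈ 𝒟 s2 i ∩ 𝒟 s2 j ∩ tkrOlder 𝒟 s2 :=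
        Finset.mem_inter.2 ⟨Finset.mem_inter.2 ⟨hxi, hxj⟩, hKold s1 s2 h12 hxK⟩
      rw [(hchain s2 h2N).2 i j hij] at this
      exact absurd this (Finset.notMem_empty x)
    intro s1 hs1 s2 hs2 hKeq
    rcases lt_trichotomy s1 s2 with h | h | h
    · exact absurd hKeq (fun h' => main s1 s2 h (Finset.mem_range.1 hs2) h')
    · exact h
    · exact absurd hKeq.symm (fun h' => main s2 s1 h (Finset.mem_range.1 hs1) h')
  have hKinj' : Set.InjOn K ↑(Finset.range N) := by
    intro a ha b hb
    exact hKinj a (Finset.mem_coe.1 ha) b (Finset.mem_coe.1 hb)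
  set 𝒜 := (Finset.range N).image K with h𝒜
  have h𝒜card : sfBound (t*r) (tkrM t r) < 𝒜.card := by
    rw [h𝒜, Finset.card_image_of_injOn hKinj', Finset.card_range]
    exact hbig
  have h𝒜le : ∀ A ∈ 𝒜, A.card ≤ t*r := by
    intro A hA
    obtain ⟨s, hs, rfl⟩ := Finset.mem_image.1 hA
    exact hKcard s (Finset.mem_range.1 hs)
  obtain ⟨Y, 𝒮, h𝒮sub, h𝒮card, h𝒮sf⟩ := sunflower_lemma (tkrM t r) (t*r) 𝒜 h𝒜le h𝒜card
  -- the set of steps corresponding to the sunflower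
  set Ss := (Finset.range N).filter (fun s => K s ∈ 𝒮) with hSstar
  have hSim : Ss.image K = 𝒮 := by
    apply Finset.Subset.antisymm
    · intro B hB
      obtain ⟨s, hs, rfl⟩ := Finset.mem_image.1 hB
      exact (Finset.mem_filter.1 hs).2
    · intro B hB
      obtain ⟨s, hs, rfl⟩ := Finset.mem_image.1 (h𝒮sub hB)
      exact Finset.mem_image.2 ⟨s, Finset.mem_filter.2 ⟨hs, hB⟩, rfl⟩
  have hSsub : Ss ⊆ Finset.range N := Finset.filter_subset _ _
  have hScard : Ss.card = tkrM t r := by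
    rw [← h𝒮card, ← hSim]
    exact (Finset.card_image_of_injOn (hKinj'.mono (by exact_mod_cast hSsub))).symm
  have hm2 : 2 ≤ tkrM t r := by
    have h1 : 1 ≤ (2^(t*r))^t := Nat.one_le_pow _ _ (Nat.pow_pos (by norm_num))
    have := Nat.mul_le_mul ht h1
    unfold tkrM; nlinarith
  have hSne : Ss.Nonempty := by rw [← Finset.card_pos, hScard]; omega
  set s₁ := Ss.min' hSne with hs₁def
  have hs₁mem : s₁ ∈ Ss := Ss.min'_mem hSne
  have hs₁lt : ∀ s ∈ Ss, s ≠ s₁ → s₁ < s := by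
    intro s hs hne
    exact lt_of_le_of_ne (Ss.min'_le s hs) (Ne.symm hne)
  have hKP : ∀ s ∈ Ss, ∀ s' ∈ Ss, s ≠ s' → K s ∩ K s' = Y := by
    intro s hs s' hs' hne
    refine h𝒮sf (K s) ?_ (K s') ?_ ?_
    · rw [← hSim]; exact Finset.mem_image_of_mem K hs
    · rw [← hSim]; exact Finset.mem_image_of_mem K hs'
    · intro hKeq; exact hne (hKinj s (hSsub hs) s' (hSsub hs') hKeq)
  have hYsub : Y ⊆ K s₁ := by
    obtain ⟨s2, hs2mem, hs2ne⟩ : ∃ s2 ∈ Ss, s2 ≠ s₁ := by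
      by_contra hcon
      push_neg at hcon
      have : Ss ⊆ {s₁} := fun s hs => Finset.mem_singleton.2 (hcon s hs)
      have := Finset.card_le_card this
      rw [hScard, Finset.card_singleton] at this
      omega
    rw [← hKP s₁ hs₁mem s2 hs2mem (Ne.symm hs2ne)]
    exact Finset.inter_subset_left
  have hYcard : Y.card ≤ t*r := le_trans (Finset.card_le_card hYsub)
    (hKcard s₁ (Finset.mem_range.1 (hSsub hs₁mem)))
  -- freshness of Y at later steps
  have hYfresh : ∀ s ∈ Ss, s ≠ s₁ → ∀ i j : Fin t, i ≠ j → 𝒟 s i ∩ 𝒟 s j ∩ Y = ∅ := by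
    intro s hs hne i j hij
    have hsN : s < N := Finset.mem_range.1 (hSsub hs)
    refine Finset.eq_empty_of_forall_notMem (fun x hx => ?_)
    have hx' := Finset.mem_inter.1 hx
    have hxold : x ∈ tkrOlder 𝒟 s := hKold s₁ s (hs₁lt s hs hne) (hYsub hx'.2)
    have : x ∈ 𝒟 s i ∩ 𝒟 s j ∩ tkrOlder 𝒟 s := Finset.mem_inter.2 ⟨hx'.1, hxold⟩
    rw [(hchain s hsN).2 i j hij] at this
    exact absurd this (Finset.notMem_empty x)
  -- cross-step intersections lie in Y
  have hcross : ∀ s ∈ Ss, ∀ s' ∈ Ss, s ≠ s' → ∀ i j : Fin t,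
      𝒟 s i ∩ 𝒟 s' j ⊆ Y := by
    intro s hs s' hs' hne i j x hx
    have hx' := Finset.mem_inter.1 hx
    rw [← hKP s hs s' hs' hne]
    exact Finset.mem_inter.2 ⟨hKsub s i hx'.1, hKsub s' j hx'.2⟩
  set S' := Ss.erase s₁ with hS'
  have hS'sub : S' ⊆ Ss := Finset.erase_subset _ _
  have hS'card : S'.card = tkrM t r - 1 := by rw [hS', Finset.card_erase_of_mem hs₁mem, hScard]
  have hS'ne : ∀ s ∈ S', s ≠ s₁ := fun s hs => Finset.ne_of_mem_erase hs
  set SA := S'.filter (fun s => ∃ i, 𝒟 s i ∩ Y = ∅) with hSA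
  set SB := S'.filter (fun s => ¬ ∃ i, 𝒟 s i ∩ Y = ∅) with hSB
  -- helper to pick t distinct steps from a set of card ≥ t
  have pick : ∀ (T : Finset ℕ), T.card = t → ∃ ι : Fin t → ℕ,
      Function.Injective ι ∧ ∀ k, ι k ∈ T := by
    intro T hT
    have e := T.equivFin
    refine ⟨fun k => (e.symm (Fin.cast hT.symm k) : ℕ), ?_, ?_⟩
    · intro a b hab
      have : e.symm (Fin.cast hT.symm a) = e.symm (Fin.cast hT.symm b) := Subtype.ext hab
      have := e.symm.injective this
      exact Fin.cast_injective _ (by exact_mod_cast this)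
    · intro k; exact (e.symm (Fin.cast hT.symm k)).2
  rcases le_or_gt t SA.card with hcase | hcase
  · -- t steps each with a clique avoiding Y: they are pairwise disjoint
    obtain ⟨T, hTsub, hTcard⟩ := Finset.exists_subset_card_eq hcase
    obtain ⟨ι, hιinj, hιmem⟩ := pick T hTcard
    have hmemSA : ∀ k, ι k ∈ SA := fun k => hTsub (hιmem k)
    have hchoice : ∀ k, ∃ i, 𝒟 (ι k) i ∩ Y = ∅ := fun k =>
      (Finset.mem_filter.1 (hmemSA k)).2
    choose idx hidx using hchoice
    refine hfree ⟨fun k => 𝒟 (ι k) (idx k), fun k => ?_, ?_⟩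
    · exact (hchain (ι k) (Finset.mem_range.1 (hSsub (hS'sub (Finset.mem_of_mem_filter _ (hmemSA k)))))).1 _
    · intro k k' hkk'
      rw [Finset.disjoint_left]
      intro x hx hx'
      have hmem : ∀ k, ι k ∈ Ss := fun k => hS'sub (Finset.mem_of_mem_filter _ (hmemSA k))
      have hY : x ∈ Y := hcross (ι k) (hmem k) (ι k') (hmem k')
        (fun h => hkk' (hιinj h)) _ _ (Finset.mem_inter.2 ⟨hx, hx'⟩)
      have : x ∈ 𝒟 (ι k) (idx k) ∩ Y := Finset.mem_inter.2 ⟨hx, hY⟩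
      rw [hidx k] at this
      exact absurd this (Finset.notMem_empty x)
  · -- most steps have all cliques meeting Y: pigeonhole on traces
    have hSBcard : t * (2^(t*r))^t ≤ SB.card := by
      have hsplit : SA.card + SB.card = S'.card := by
        rw [hSA, hSB]
        exact Finset.card_filter_add_card_filter_not _
      rw [hS'card] at hsplit
      unfold tkrM at hsplit
      omega
    set PP := Fintype.piFinset (fun _ : Fin t => Y.powerset) with hPP
    have hmapsto : ∀ s ∈ SB, (fun i => 𝒟 s i ∩ Y) ∈ PP := by
      intro s _
      rw [hPP, Fintype.mem_piFinset]
      intro i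
      exact Finset.mem_powerset.2 Finset.inter_subset_right
    have hPPcard : PP.card ≤ (2^(t*r))^t := by
      rw [hPP, Fintype.card_piFinset]
      calc ∏ _i : Fin t, (Y.powerset).card = ((2:ℕ)^Y.card)^t := by
            simp [Finset.card_powerset, Finset.prod_const]
      _ ≤ (2^(t*r))^t := Nat.pow_le_pow_left (Nat.pow_le_pow_right (by norm_num) hYcard) t
    have hPPne : PP.Nonempty := ⟨fun _ => ∅, by
      rw [hPP, Fintype.mem_piFinset]; intro i; exact Finset.empty_mem_powerset _⟩
    obtain ⟨π₀, hπ₀, hfib⟩ := Finset.exists_le_card_fiber_of_mul_le_card_of_maps_to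
      hmapsto hPPne (le_trans (Nat.mul_le_mul_right t hPPcard) (by rw [mul_comm]; exact hSBcard))
    obtain ⟨T, hTsub, hTcard⟩ := Finset.exists_subset_card_eq hfib
    obtain ⟨ι, hιinj, hιmem⟩ := pick T hTcard
    have hmemfib : ∀ k, ι k ∈ SB ∧ (fun i => 𝒟 (ι k) i ∩ Y) = π₀ := by
      intro k
      have := hTsub (hιmem k)
      exact ⟨Finset.mem_of_mem_filter _ this, (Finset.mem_filter.1 this).2⟩
    have hmemS' : ∀ k, ι k ∈ S' := fun k => Finset.mem_of_mem_filter _ (hmemfib k).1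
    have hmemSstar : ∀ k, ι k ∈ Ss := fun k => hS'sub (hmemS' k)
    refine hfree ⟨fun k => 𝒟 (ι k) k, fun k => ?_, ?_⟩
    · exact (hchain (ι k) (Finset.mem_range.1 (hSsub (hmemSstar k)))).1 _
    · intro k k' hkk'
      rw [Finset.disjoint_left]
      intro x hx hx'
      have hιne : ι k ≠ ι k' := fun h => hkk' (hιinj h)
      have hY : x ∈ Y := hcross (ι k) (hmemSstar k) (ι k') (hmemSstar k') hιne _ _
        (Finset.mem_inter.2 ⟨hx, hx'⟩)
      -- x ∈ π₀ k and x ∈ π₀ k', but those traces are disjoint (seen inside step ι k')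
      have hx1 : x ∈ π₀ k := by
        rw [← congrFun (hmemfib k).2 k]
        exact Finset.mem_inter.2 ⟨hx, hY⟩
      have hx2 : x ∈ π₀ k' := by
        rw [← congrFun (hmemfib k').2 k']
        exact Finset.mem_inter.2 ⟨hx', hY⟩
      have hx1' : x ∈ 𝒟 (ι k') k ∩ Y := by
        rw [congrFun (hmemfib k').2 k]; exact hx1
      have hx2' : x ∈ 𝒟 (ι k') k' ∩ Y := by
        rw [congrFun (hmemfib k').2 k']; exact hx2
      have : x ∈ 𝒟 (ι k') k ∩ 𝒟 (ι k') k' ∩ Y :=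
        Finset.mem_inter.2 ⟨Finset.mem_inter.2 ⟨(Finset.mem_inter.1 hx1').1,
          (Finset.mem_inter.1 hx2').1⟩, hY⟩
      rw [hYfresh (ι k') (hmemSstar k') (hS'ne _ (hmemS' k')) k k' hkk'] at this
      exact absurd this (Finset.notMem_empty x)
end Chains

section GoodX
variable {V : Type*} [DecidableEq V]

lemma tkrOlder_congr {t : ℕ} (𝒟 𝒟' : ℕ → Fin t → Finset V) (s : ℕ)
    (h : ∀ s' < s, 𝒟 s' = 𝒟' s') : tkrOlder 𝒟 s = tkrOlder 𝒟' s := by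
  unfold tkrOlder
  apply Finset.biUnion_congr rfl
  intro s' hs'
  rw [h s' (Finset.mem_range.1 hs')]

lemma exists_goodX {EG : Set (Finset V)} {p t r : ℕ} (ht : 1 ≤ t)
    (hfree : HTKrFree EG t p r) :
    ∃ X : Finset V, X.card ≤ tkrN0 t r * (t*r) ∧
      ¬ ∃ C : Fin t → Finset V, (∀ i, IsHClique EG p r (C i)) ∧
        ∀ i j : Fin t, i ≠ j → C i ∩ C j ∩ X = ∅ := by
  classical
  set P : ℕ → Prop := fun N => ∃ 𝒟, TkrChain EG p t r N 𝒟 with hPdef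
  have hP0 : P 0 := ⟨fun _ _ => ∅, fun s hs => absurd hs (by omega)⟩
  have hbound : ∀ N, P N → N ≤ tkrN0 t r := by
    rintro N ⟨𝒟, h𝒟⟩
    exact tkrChain_bound ht hfree N 𝒟 h𝒟
  set Nmax := Nat.findGreatest P (tkrN0 t r) with hNmax
  have hPmax : P Nmax := Nat.findGreatest_spec (Nat.zero_le _) hP0
  obtain ⟨𝒟, h𝒟⟩ := hPmax
  refine ⟨tkrOlder 𝒟 Nmax, ?_, ?_⟩
  · calc (tkrOlder 𝒟 Nmax).card
        ≤ ∑ s' ∈ Finset.range Nmax, (Finset.univ.biUnion (𝒟 s')).card :=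
          Finset.card_biUnion_le
    _ ≤ (Finset.range Nmax).card * (t*r) := by
        apply Finset.sum_le_card_nsmul
        intro s hs
        calc (Finset.univ.biUnion (𝒟 s)).card ≤ ∑ i : Fin t, (𝒟 s i).card :=
              Finset.card_biUnion_le
        _ ≤ Finset.univ.card * r := Finset.sum_le_card_nsmul _ _ _
            (fun i _ => le_of_eq ((h𝒟 s (Finset.mem_range.1 hs)).1 i).1)
        _ = t * r := by simp
    _ ≤ tkrN0 t r * (t*r) := by
        rw [Finset.card_range]
        exact Nat.mul_le_mul_right _ (Nat.findGreatest_le _)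
  · rintro ⟨C, hCcliq, hCdis⟩
    set 𝒟' := Function.update 𝒟 Nmax C with h𝒟'
    have hupd : ∀ s' < Nmax, 𝒟' s' = 𝒟 s' := by
      intro s' hs'
      rw [h𝒟', Function.update_of_ne (by omega)]
    have hchain' : TkrChain EG p t r (Nmax + 1) 𝒟' := by
      intro s hs
      rcases Nat.lt_or_ge s Nmax with hsN | hsN
      · have hold : tkrOlder 𝒟' s = tkrOlder 𝒟 s :=
          tkrOlder_congr _ _ _ (fun s' hs' => (hupd s' (lt_trans hs' hsN)))
        rw [hupd s hsN, hold]
        exact h𝒟 s hsN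
      · have hseq : s = Nmax := by omega
        have hC : 𝒟' s = C := by rw [hseq, h𝒟']; exact Function.update_self _ _ _
        have hold : tkrOlder 𝒟' s = tkrOlder 𝒟 s :=
          tkrOlder_congr _ _ _ (fun s' hs' => hupd s' (by omega))
        rw [hC, hold, hseq]
        exact ⟨hCcliq, hCdis⟩
    have hP1 : P (Nmax + 1) := ⟨𝒟', hchain'⟩
    have hle : Nmax + 1 ≤ tkrN0 t r := hbound _ hP1
    have := Nat.le_findGreatest hle hP1
    omega
end GoodX

section Counting
variable {W : Type*} [Fintype W] [DecidableEq W]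

lemma hCopyCount_le {n : ℕ} (EH : Set (Finset W)) (EG : Set (Finset (Fin n)))
    (X : Finset (Fin n)) (b : ℕ) (hbW : b ≤ Fintype.card W)
    (hb : ∀ f : W → Fin n, Function.Injective f → (∀ e ∈ EH, e.image f ∈ EG) →
      (Finset.univ.filter (fun x => f x ∉ X)).card ≤ b) :
    hCopyCount EH EG ≤ 2^(Fintype.card W) * ((X.card + 1)^(Fintype.card W) * n^b) := by
  classical
  -- trivial bound for n = 0
  rcases Nat.eq_zero_or_pos n with hn | hn
  · subst hn
    have h1 : hCopyCount EH EG ≤ Fintype.card (W → Fin 0) := by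
      unfold hCopyCount
      rw [Nat.card_eq_fintype_card]
      exact Fintype.card_subtype_le _
    rw [Fintype.card_fun] at h1
    rcases Nat.eq_zero_or_pos (Fintype.card W) with hw | hw
    · have hb0 : b = 0 := by omega
      rw [hw] at h1 ⊢
      rw [hb0]
      simpa using h1
    · have h0 : Fintype.card (Fin 0) ^ Fintype.card W = 0 := by
        simp only [Fintype.card_fin]
        exact Nat.zero_pow (by omega)
      rw [h0] at h1
      omega
  -- main case
  have hcount : hCopyCount EH EG = (Finset.univ.filter
      (fun f : W → Fin n => Function.Injective f ∧ ∀ e ∈ EH, e.image f ∈ EG)).card := by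
    unfold hCopyCount
    rw [Nat.card_eq_fintype_card, Fintype.card_subtype]
  rw [hcount]
  set F := Finset.univ.filter
      (fun f : W → Fin n => Function.Injective f ∧ ∀ e ∈ EH, e.image f ∈ EG) with hF
  set φ : (W → Fin n) → Finset W := fun f => Finset.univ.filter (fun x => f x ∉ X) with hφ
  set 𝒮 := (Finset.univ : Finset W).powerset.filter (fun S => S.card ≤ b) with h𝒮
  have hmaps : ∀ f ∈ F, φ f ∈ 𝒮 := by
    intro f hf
    obtain ⟨-, hinj, hedge⟩ := Finset.mem_filter.1 hf
    refine Finset.mem_filter.2 ⟨Finset.mem_powerset.2 (Finset.subset_univ _), ?_⟩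
    exact hb f hinj hedge
  rw [Finset.card_eq_sum_card_fiberwise hmaps]
  have hfiber : ∀ S ∈ 𝒮, (F.filter (fun f => φ f = S)).card ≤ (X.card+1)^(Fintype.card W) * n^b := by
    intro S hS
    have hScard : S.card ≤ b := (Finset.mem_filter.1 hS).2
    have hinj : Set.InjOn
        (fun f : W → Fin n => ((fun x : ↥((Sᶜ : Finset W)) => f x.1), (fun x : ↥S => f x.1)))
        ↑(F.filter (fun f => φ f = S)) := by
      intro f hf g hg heq
      have h1 := congrArg Prod.fst heq
      have h2 := congrArg Prod.snd heq
      funext x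
      by_cases hx : x ∈ S
      · exact congrFun h2 ⟨x, hx⟩
      · have hx' : x ∈ (Sᶜ : Finset W) := Finset.mem_compl.2 hx
        exact congrFun h1 ⟨x, hx'⟩
    have hmaps2 : ∀ f ∈ F.filter (fun f => φ f = S),
        (fun x : ↥((Sᶜ : Finset W)) => f x.1) ∈
          (Finset.univ : Finset (↥((Sᶜ : Finset W)) → Fin n)).filter
            (fun g => ∀ x, g x ∈ X) := by
      intro f hf
      refine Finset.mem_filter.2 ⟨Finset.mem_univ _, fun x => ?_⟩
      obtain ⟨-, hφf⟩ := Finset.mem_filter.1 hf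
      have hx1 : x.1 ∉ S := Finset.mem_compl.1 x.2
      by_contra hcon
      have hmem : x.1 ∈ φ f := Finset.mem_filter.2 ⟨Finset.mem_univ _, hcon⟩
      rw [hφf] at hmem
      exact hx1 hmem
    calc (F.filter (fun f => φ f = S)).card
        ≤ (((Finset.univ : Finset (↥((Sᶜ : Finset W)) → Fin n)).filter
            (fun g => ∀ x, g x ∈ X)) ×ˢ (Finset.univ : Finset (↥S → Fin n))).card := by
          apply Finset.card_le_card_of_injOn
            (fun f => ((fun x : ↥((Sᶜ : Finset W)) => f x.1), (fun x : ↥S => f x.1)))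
          · intro f hf
            exact Finset.mem_product.2 ⟨hmaps2 f hf, Finset.mem_univ _⟩
          · exact hinj
    _ ≤ (X.card+1)^(Fintype.card W) * n^b := by
          rw [Finset.card_product]
          apply Nat.mul_le_mul
          · -- functions into X
            have hsub : ((Finset.univ : Finset (↥((Sᶜ : Finset W)) → Fin n)).filter
                (fun g => ∀ x, g x ∈ X)) ⊆
                (Finset.univ : Finset (↥((Sᶜ : Finset W)) → ↥X)).image
                  (fun g => fun x => (g x : Fin n)) := by
              intro g hg
              have hgX := (Finset.mem_filter.1 hg).2
              exact Finset.mem_image.2 ⟨fun x => ⟨g x, hgX x⟩, Finset.mem_univ _, rfl⟩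
            calc ((Finset.univ : Finset (↥((Sᶜ : Finset W)) → Fin n)).filter
                (fun g => ∀ x, g x ∈ X)).card
                ≤ ((Finset.univ : Finset (↥((Sᶜ : Finset W)) → ↥X)).image
                  (fun g => fun x => (g x : Fin n))).card := Finset.card_le_card hsub
            _ ≤ (Finset.univ : Finset (↥((Sᶜ : Finset W)) → ↥X)).card :=
                  Finset.card_image_le
            _ = X.card ^ (Sᶜ : Finset W).card := by
                  rw [Finset.card_univ, Fintype.card_fun, Fintype.card_coe, Fintype.card_coe]
            _ ≤ (X.card + 1) ^ (Sᶜ : Finset W).card :=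
                  Nat.pow_le_pow_left (Nat.le_succ _) _
            _ ≤ (X.card + 1) ^ (Fintype.card W) :=
                  Nat.pow_le_pow_right (Nat.succ_le_succ (Nat.zero_le _))
                    (by simpa using Finset.card_le_univ (Sᶜ : Finset W))
          · calc (Finset.univ : Finset (↥S → Fin n)).card = n ^ S.card := by
                  rw [Finset.card_univ, Fintype.card_fun, Fintype.card_fin, Fintype.card_coe]
            _ ≤ n ^ b := Nat.pow_le_pow_right hn hScard
  calc ∑ S ∈ 𝒮, (F.filter (fun f => φ f = S)).card
      ≤ ∑ _S ∈ 𝒮, (X.card+1)^(Fintype.card W) * n^b := Finset.sum_le_sum hfiber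
  _ = 𝒮.card * ((X.card+1)^(Fintype.card W) * n^b) := by rw [Finset.sum_const, smul_eq_mul]
  _ ≤ 2^(Fintype.card W) * ((X.card+1)^(Fintype.card W) * n^b) := by
      apply Nat.mul_le_mul_right
      calc 𝒮.card ≤ (Finset.univ : Finset W).powerset.card :=
            Finset.card_le_card (Finset.filter_subset _ _)
      _ = 2^(Fintype.card W) := by rw [Finset.card_powerset, Finset.card_univ]
end Counting

section Transfer
variable {W : Type*} [Fintype W] [DecidableEq W] {n : ℕ}

/-- Transfer, case `p ≥ 2`. -/
lemma blowup_free_of_goodX {EH : Set (Finset W)} {EG : Set (Finset (Fin n))} {p t r : ℕ}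
    (hp2 : 2 ≤ p) (hpr : p ≤ r) (X : Finset (Fin n))
    (hX : ¬ ∃ C : Fin t → Finset (Fin n), (∀ i, IsHClique EG p r (C i)) ∧
        ∀ i j : Fin t, i ≠ j → C i ∩ C j ∩ X = ∅)
    (f : W → Fin n) (hinj : Function.Injective f)
    (hedge : ∀ e ∈ EH, e.image f ∈ EG) :
    HTKrFree (blowupEdges EH (Finset.univ.filter (fun x => f x ∉ X)) t) t p r := by
  classical
  set Uf := Finset.univ.filter (fun x => f x ∉ X) with hUf
  rintro ⟨S, hScliq, hSdis⟩
  set proj : BlowupVertex Uf t → W := fun v => v.1.1 with hproj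
  have projInj : ∀ i : Fin t, Set.InjOn proj ↑(S i) := by
    intro i a ha b hb hab
    by_contra hne
    have habsub : ({a, b} : Finset (BlowupVertex Uf t)) ⊆ S i := by
      intro z hz
      rcases Finset.mem_insert.1 hz with rfl | hz
      · exact Finset.mem_coe.1 ha
      · rw [Finset.mem_singleton.1 hz]; exact Finset.mem_coe.1 hb
    have habcard : ({a, b} : Finset (BlowupVertex Uf t)).card = 2 :=
      Finset.card_pair hne
    obtain ⟨e, hesub1, hesub2, hecard⟩ := Finset.exists_subsuperset_card_eq (n := p) habsub
      (by rw [habcard]; exact hp2) (by rw [(hScliq i).1]; exact hpr)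
    have he : e ∈ blowupEdges EH Uf t := (hScliq i).2 e hesub2 hecard
    obtain ⟨e₀, he₀, himg, hc⟩ := he
    have hnotinjOn : ¬ Set.InjOn proj ↑e := by
      intro hcon
      exact hne (hcon (Finset.mem_coe.2 (hesub1 (Finset.mem_insert_self a {b})))
        (Finset.mem_coe.2 (hesub1 (Finset.mem_insert.2 (Or.inr (Finset.mem_singleton_self b))))) hab)
    have : (e.image proj).card = e.card := by rw [himg, ← hc]
    exact hnotinjOn (Finset.card_image_iff.1 this)
  set R : Fin t → Finset W := fun i => (S i).image proj with hR
  have hRcard : ∀ i, (R i).card = r := by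
    intro i
    rw [hR]
    simp only
    rw [Finset.card_image_of_injOn (projInj i), (hScliq i).1]
  have hRcliq : ∀ i, IsHClique EH p r (R i) := by
    intro i
    refine ⟨hRcard i, ?_⟩
    intro e₀ hsub hcard
    set e := (S i).filter (fun v => proj v ∈ e₀) with he
    have hesub : e ⊆ S i := Finset.filter_subset _ _
    have himg : e.image proj = e₀ := by
      apply Finset.Subset.antisymm
      · intro x hx
        obtain ⟨v, hv, rfl⟩ := Finset.mem_image.1 hx
        exact (Finset.mem_filter.1 hv).2
      · intro x hx
        obtain ⟨v, hv, rfl⟩ := Finset.mem_image.1 (hsub hx)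
        exact Finset.mem_image.2 ⟨v, Finset.mem_filter.2 ⟨hv, hx⟩, rfl⟩
    have hecard : e.card = p := by
      rw [← hcard, ← himg]
      exact (Finset.card_image_of_injOn ((projInj i).mono (by exact_mod_cast hesub))).symm
    have hbe : e ∈ blowupEdges EH Uf t := (hScliq i).2 e hesub hecard
    obtain ⟨e₁, he₁, himg1, hc1⟩ := hbe
    rwa [himg1.symm.trans himg] at he₁
  have hRUf : ∀ i j : Fin t, i ≠ j → R i ∩ R j ⊆ Uf := by
    intro i j hij x hx
    obtain ⟨hxi, hxj⟩ := Finset.mem_inter.1 hx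
    obtain ⟨a, ha, hax⟩ := Finset.mem_image.1 hxi
    obtain ⟨b, hb, hbx⟩ := Finset.mem_image.1 hxj
    by_contra hxU
    have ha0 : (a.1.2 : ℕ) = 0 := by
      rcases a.2 with h | h
      · have h' : proj a ∈ Uf := h
        rw [hax] at h'; exact absurd h' hxU
      · exact h
    have hb0 : (b.1.2 : ℕ) = 0 := by
      rcases b.2 with h | h
      · have h' : proj b ∈ Uf := h
        rw [hbx] at h'; exact absurd h' hxU
      · exact h
    have hab : a = b := by
      apply Subtype.ext
      apply Prod.ext
      · show proj a = proj b
        rw [hax, hbx]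
      · exact Fin.ext (by rw [ha0, hb0])
    rw [hab] at ha
    exact Finset.disjoint_left.1 (hSdis i j hij) ha hb
  refine hX ⟨fun i => (R i).image f, fun i => ?_, fun i j hij => ?_⟩
  · constructor
    · rw [Finset.card_image_of_injective _ hinj, hRcard]
    · intro e hsub hcard
      set e₀ := (R i).filter (fun x => f x ∈ e) with he₀
      have he₀sub : e₀ ⊆ R i := Finset.filter_subset _ _
      have himg : e₀.image f = e := by
        apply Finset.Subset.antisymm
        · intro y hy
          obtain ⟨x, hx, rfl⟩ := Finset.mem_image.1 hy
          exact (Finset.mem_filter.1 hx).2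
        · intro y hy
          obtain ⟨x, hx, rfl⟩ := Finset.mem_image.1 (hsub hy)
          exact Finset.mem_image.2 ⟨x, Finset.mem_filter.2 ⟨hx, hy⟩, rfl⟩
      have he₀card : e₀.card = p := by
        rw [← hcard, ← himg, Finset.card_image_of_injective _ hinj]
      have : e₀ ∈ EH := (hRcliq i).2 e₀ he₀sub he₀card
      rw [← himg]
      exact hedge e₀ this
  · refine Finset.eq_empty_of_forall_notMem (fun y hy => ?_)
    obtain ⟨hy1, hyX⟩ := Finset.mem_inter.1 hy
    obtain ⟨hyi, hyj⟩ := Finset.mem_inter.1 hy1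
    obtain ⟨x₁, hx₁, hfx₁⟩ := Finset.mem_image.1 hyi
    obtain ⟨x₂, hx₂, hfx₂⟩ := Finset.mem_image.1 hyj
    have hx12 : x₁ = x₂ := hinj (by rw [hfx₁, hfx₂])
    have hxU : x₁ ∈ Uf := hRUf i j hij (Finset.mem_inter.2 ⟨hx₁, by rw [hx12]; exact hx₂⟩)
    have : f x₁ ∉ X := (Finset.mem_filter.1 hxU).2
    rw [hfx₁] at this
    exact this hyX

/-- A `tK_r^1`-free hypergraph has fewer than `t*r` edge-vertices. -/
lemma ev_card_lt {EG : Set (Finset (Fin n))} {t r : ℕ}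
    (hfree : HTKrFree EG t 1 r)
    (EV : Finset (Fin n)) (hEVdef : ∀ v : Fin n, ({v} : Finset (Fin n)) ∈ EG ↔ v ∈ EV) :
    EV.card < t * r := by
  classical
  by_contra hcon
  push_neg at hcon
  obtain ⟨Z, hZsub, hZcard⟩ := Finset.exists_subset_card_eq hcon
  have e1 := Z.equivFin
  set F : Fin t × Fin r → Fin n :=
    fun q => (e1.symm (Fin.cast hZcard.symm (finProdFinEquiv q)) : Fin n) with hF
  have hFinj : Function.Injective F := by
    intro q q' hq
    have h1 : e1.symm (Fin.cast hZcard.symm (finProdFinEquiv q)) =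
        e1.symm (Fin.cast hZcard.symm (finProdFinEquiv q')) := Subtype.ext hq
    have h2 := e1.symm.injective h1
    have h3 := Fin.cast_injective hZcard.symm h2
    exact finProdFinEquiv.injective h3
  have hFmem : ∀ q, F q ∈ EV := fun q => hZsub (e1.symm _).2
  refine hfree ⟨fun i => (Finset.univ : Finset (Fin r)).image (fun k => F (i, k)),
    fun i => ⟨?_, ?_⟩, ?_⟩
  · rw [Finset.card_image_of_injective _ (fun k k' hk => by
      have := hFinj hk; exact (Prod.mk.injEq _ _ _ _ ▸ this).2), Finset.card_univ,
      Fintype.card_fin]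
  · intro e hesub hecard
    obtain ⟨v, rfl⟩ := Finset.card_eq_one.1 hecard
    have hv : v ∈ (Finset.univ : Finset (Fin r)).image (fun k => F (i, k)) :=
      hesub (Finset.mem_singleton_self v)
    obtain ⟨k, _, rfl⟩ := Finset.mem_image.1 hv
    exact (hEVdef _).2 (hFmem (i, k))
  · intro i j hij
    rw [Finset.disjoint_left]
    intro x hx hx'
    obtain ⟨k, _, hk⟩ := Finset.mem_image.1 hx
    obtain ⟨k', _, hk'⟩ := Finset.mem_image.1 hx'
    have : (i, k) = (j, k') := hFinj (by rw [hk, hk'])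
    exact hij (congrArg Prod.fst this)

/-- Transfer, case `p = 1`. -/
lemma blowup_free_p1 {EH : Set (Finset W)} {EG : Set (Finset (Fin n))} {t r : ℕ}
    (EV : Finset (Fin n)) (hEVdef : ∀ v : Fin n, ({v} : Finset (Fin n)) ∈ EG ↔ v ∈ EV)
    (hEVcard : EV.card < t * r)
    (f : W → Fin n) (hinj : Function.Injective f)
    (hedge : ∀ e ∈ EH, e.image f ∈ EG) :
    HTKrFree (blowupEdges EH (Finset.univ.filter (fun x => f x ∉ EV)) t) t 1 r := by
  classical
  set Uf := Finset.univ.filter (fun x => f x ∉ EV) with hUf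
  rintro ⟨S, hScliq, hSdis⟩
  -- every vertex of every blowup clique projects to an edge-vertex of H, with copy index 0
  have key : ∀ i : Fin t, ∀ v ∈ S i, ({v.1.1} : Finset W) ∈ EH ∧ (v.1.2 : ℕ) = 0 := by
    intro i v hv
    have h1 : ({v} : Finset (BlowupVertex Uf t)) ∈ blowupEdges EH Uf t :=
      (hScliq i).2 {v} (Finset.singleton_subset_iff.2 hv) (Finset.card_singleton v)
    obtain ⟨e₀, he₀, himg, _⟩ := h1
    rw [Finset.image_singleton] at himg
    have heEH : ({v.1.1} : Finset W) ∈ EH := by rwa [himg]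
    have hfEV : f v.1.1 ∈ EV := by
      rw [← hEVdef]
      have h3 := hedge _ heEH
      rwa [Finset.image_singleton] at h3
    have hnotUf : v.1.1 ∉ Uf := fun hmem => (Finset.mem_filter.1 hmem).2 hfEV
    rcases v.2 with h | h
    · exact absurd h hnotUf
    · exact ⟨heEH, h⟩
  set B := (Finset.univ : Finset (Fin t)).biUnion S with hB
  have hBcard : B.card = t * r := by
    rw [hB, Finset.card_biUnion (fun i _ j _ hij => hSdis i j hij)]
    have : ∀ i : Fin t, (S i).card = r := fun i => (hScliq i).1
    rw [Finset.sum_congr rfl (fun i _ => this i), Finset.sum_const, Finset.card_univ,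
      Fintype.card_fin, smul_eq_mul]
  have hprojInj : Set.InjOn (fun v : BlowupVertex Uf t => v.1.1) ↑B := by
    intro a ha b hb hab
    obtain ⟨i, _, hai⟩ := Finset.mem_biUnion.1 (Finset.mem_coe.1 ha)
    obtain ⟨j, _, hbj⟩ := Finset.mem_biUnion.1 (Finset.mem_coe.1 hb)
    have ha0 := (key i a hai).2
    have hb0 := (key j b hbj).2
    apply Subtype.ext
    apply Prod.ext
    · exact hab
    · exact Fin.ext (by rw [ha0, hb0])
  have himgsub : B.image (fun v : BlowupVertex Uf t => v.1.1) ⊆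
      Finset.univ.filter (fun x => ({x} : Finset W) ∈ EH) := by
    intro x hx
    obtain ⟨v, hv, rfl⟩ := Finset.mem_image.1 hx
    obtain ⟨i, _, hvi⟩ := Finset.mem_biUnion.1 hv
    exact Finset.mem_filter.2 ⟨Finset.mem_univ _, (key i v hvi).1⟩
  have hehEV : (Finset.univ.filter (fun x => ({x} : Finset W) ∈ EH)).card ≤ EV.card := by
    apply Finset.card_le_card_of_injOn f
    · intro x hx
      have hxEH := (Finset.mem_filter.1 hx).2
      rw [Finset.mem_coe, ← hEVdef]
      have h2 := hedge _ hxEH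
      rwa [Finset.image_singleton] at h2
    · exact hinj.injOn
  have : t * r ≤ EV.card := by
    calc t * r = B.card := hBcard.symm
    _ = (B.image (fun v : BlowupVertex Uf t => v.1.1)).card :=
        (Finset.card_image_of_injOn hprojInj).symm
    _ ≤ (Finset.univ.filter (fun x => ({x} : Finset W) ∈ EH)).card :=
        Finset.card_le_card himgsub
    _ ≤ EV.card := hehEV
  omega
end Transfer


/-- For every p-uniform hypergraph H and integers t ≥ 1, r ≥ p,
ex(n, H, tK_r^p) = O(n^{b(H)}): there is a constant C such that every n-vertex p-graph with
no t pairwise vertex-disjoint copies of K_r^p contains at most C·n^{b(H)} copies of H,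
where b(H) is the largest size of a set U ⊆ V(H) such that the partial (t,U)-blowup of H
contains no t pairwise vertex-disjoint copies of K_r^p. -/
theorem ex_H_tKrp_upper {W : Type*} [Fintype W] [DecidableEq W] (p t r : ℕ)
    (hp : 1 ≤ p) (ht : 1 ≤ t) (hpr : p ≤ r)
    (EH : Set (Finset W)) (hunif : ∀ e ∈ EH, e.card = p)
    (U : Finset W) (hU : HTKrFree (blowupEdges EH U t) t p r)
    (hUmax : ∀ U' : Finset W, HTKrFree (blowupEdges EH U' t) t p r → U'.card ≤ U.card) :
    ∃ C : ℝ, ∀ n : ℕ, ∀ EG : Set (Finset (Fin n)),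
      (∀ e ∈ EG, e.card = p) → HTKrFree EG t p r →
      (hCopyCount EH EG : ℝ) ≤ C * (n : ℝ) ^ U.card := by
  classical
  set w := Fintype.card W with hw
  set Kb := tkrN0 t r * (t*r) + t*r with hKb
  refine ⟨((2^w * (Kb+1)^w : ℕ) : ℝ), ?_⟩
  intro n EG hEGunif hfree
  have hbW : U.card ≤ w := by
    rw [hw, ← Finset.card_univ]
    exact Finset.card_le_univ U
  have hmain : ∃ X : Finset (Fin n), X.card ≤ Kb ∧
      ∀ f : W → Fin n, Function.Injective f → (∀ e ∈ EH, e.image f ∈ EG) →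
        (Finset.univ.filter (fun x => f x ∉ X)).card ≤ U.card := by
    rcases Nat.lt_or_ge p 2 with hp1 | hp2
    · -- p = 1
      have hp1' : p = 1 := by omega
      subst hp1'
      set EV := Finset.univ.filter (fun v => ({v} : Finset (Fin n)) ∈ EG) with hEV
      have hEVdef : ∀ v : Fin n, ({v} : Finset (Fin n)) ∈ EG ↔ v ∈ EV := by
        intro v
        rw [hEV, Finset.mem_filter]
        exact ⟨fun h => ⟨Finset.mem_univ _, h⟩, fun h => h.2⟩
      have hEVlt := ev_card_lt hfree EV hEVdef
      refine ⟨EV, by omega, ?_⟩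
      intro f hinj hedge
      exact hUmax _ (blowup_free_p1 EV hEVdef hEVlt f hinj hedge)
    · -- p ≥ 2
      obtain ⟨X, hXcard, hXprop⟩ := exists_goodX ht hfree
      refine ⟨X, by omega, ?_⟩
      intro f hinj hedge
      exact hUmax _ (blowup_free_of_goodX hp2 hpr X hXprop f hinj hedge)
  obtain ⟨X, hXK, hprop⟩ := hmain
  have hcount := hCopyCount_le EH EG X U.card hbW hprop
  have h2 : hCopyCount EH EG ≤ 2^w * ((Kb+1)^w * n^(U.card)) := by
    refine le_trans hcount ?_
    apply Nat.mul_le_mul_left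
    apply Nat.mul_le_mul_right
    exact Nat.pow_le_pow_left (by omega) _
  calc (hCopyCount EH EG : ℝ)
      ≤ ((2^w * ((Kb+1)^w * n^(U.card)) : ℕ) : ℝ) := by exact_mod_cast h2
  _ = ((2^w * (Kb+1)^w : ℕ) : ℝ) * (n:ℝ)^(U.card) := by push_cast; ring
end

section
/- Let G be an n-vertex graph with no t pairwise vertex-disjoint copies of K_r, let s ≥ r with tr > s, and x = ⌈(tr−s)/(t−1)⌉ − 1 (t ≥ 2). Then the family ℋ of (x+1)-element vertex subsets of G that induce a clique and are contained in the vertex set of some s-clique of G does not contain c pairwise disjoint members, for some constant c = c(s,t,r) independent of n and G. -/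
open SimpleGraph

/-- Greedy selection of pairwise disjoint `q`-subsets. -/
private lemma greedy_disjoint {V : Type} [DecidableEq V] (q : ℕ) :
    ∀ (m : ℕ) (A : Fin m → Finset V), (∀ k, m * q ≤ (A k).card) →
    ∃ e : Fin m → Finset V, (∀ k, e k ⊆ A k) ∧ (∀ k, (e k).card = q) ∧
      ∀ j k, j ≠ k → Disjoint (e j) (e k) := by
  intro m
  induction m with
  | zero =>
    intro A _
    exact ⟨fun k => k.elim0, fun k => k.elim0, fun k => k.elim0, fun j => j.elim0⟩
  | succ n ih =>
    intro A h
    have hq0 : q ≤ (A 0).card := by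
      refine le_trans ?_ (h 0)
      calc q = 1 * q := (one_mul q).symm
        _ ≤ (n+1) * q := Nat.mul_le_mul_right q (by omega)
    obtain ⟨e0, he0A, he0card⟩ := Finset.exists_subset_card_eq hq0
    obtain ⟨e', h1, h2, h3⟩ := ih (fun k => A k.succ \ e0) (fun k => by
      have hk : n * q + e0.card ≤ (A k.succ).card := by
        rw [he0card]
        have := h k.succ
        rwa [Nat.succ_mul] at this
      exact (Nat.le_sub_of_add_le hk).trans (Finset.le_card_sdiff e0 (A k.succ)))
    refine ⟨Fin.cases e0 e', ?_, ?_, ?_⟩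
    · intro k
      refine Fin.cases ?_ ?_ k
      · simpa using he0A
      · intro i
        simpa using (h1 i).trans Finset.sdiff_subset
    · intro k
      refine Fin.cases ?_ ?_ k
      · simpa using he0card
      · intro i; simpa using h2 i
    · intro j
      refine Fin.cases ?_ ?_ j
      · intro k
        refine Fin.cases ?_ ?_ k
        · intro hne; exact absurd rfl hne
        · intro k' _
          simp only [Fin.cases_zero, Fin.cases_succ]
          exact (Finset.disjoint_of_subset_left (h1 k') Finset.sdiff_disjoint).symm
      · intro j' k
        refine Fin.cases ?_ ?_ k
        · intro _
          simp only [Fin.cases_zero, Fin.cases_succ]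
          exact Finset.disjoint_of_subset_left (h1 j') Finset.sdiff_disjoint
        · intro k' hne
          simp only [Fin.cases_succ]
          refine h3 j' k' (fun hh => hne ?_)
          rw [hh]
  
/-- Independent set in a digraph with bounded out-neighbourhoods. -/
private lemma indep_of_bounded {ι : Type} [DecidableEq ι] (s : ℕ) (B : ι → Finset ι)
    (hB : ∀ i, (B i).card ≤ s) :
    ∀ (k : ℕ) (A : Finset ι), (2*s+1) * k ≤ A.card →
    ∃ I, I ⊆ A ∧ I.card = k ∧ ∀ i ∈ I, ∀ j ∈ I, i ≠ j → j ∉ B i := by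
  intro k
  induction k with
  | zero => intro A _; exact ⟨∅, Finset.empty_subset _, rfl, by simp⟩
  | succ n ih =>
    intro A hA
    have hAcard : 2*s+1 ≤ A.card := by
      refine le_trans ?_ hA
      calc 2*s+1 = (2*s+1) * 1 := (mul_one _).symm
        _ ≤ (2*s+1) * (n+1) := Nat.mul_le_mul_left _ (by omega)
    have hApos : 0 < A.card := by omega
    -- average degree bound
    have hrow : ∀ i ∈ A, (A.filter (fun j => j ∈ B i)).card ≤ s := by
      intro i _
      exact le_trans (Finset.card_le_card (fun j hj => (Finset.mem_filter.mp hj).2)) (hB i)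
    have hswap : ∑ i ∈ A, (A.filter (fun j => i ∈ B j)).card ≤ s * A.card := by
      have : ∑ i ∈ A, (A.filter (fun j => i ∈ B j)).card
          = ∑ j ∈ A, (A.filter (fun i => i ∈ B j)).card := by
        simp only [Finset.card_filter]
        exact Finset.sum_comm
      rw [this]
      calc ∑ j ∈ A, (A.filter (fun i => i ∈ B j)).card ≤ ∑ _j ∈ A, s :=
            Finset.sum_le_sum (fun j _ =>
              le_trans (Finset.card_le_card (fun i hi => (Finset.mem_filter.mp hi).2)) (hB j))
        _ = A.card * s := by rw [Finset.sum_const, smul_eq_mul]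
        _ = s * A.card := mul_comm _ _
    have hsum : ∑ i ∈ A, (A.filter (fun j => j ∈ B i ∨ i ∈ B j)).card ≤ 2*s * A.card := by
      calc ∑ i ∈ A, (A.filter (fun j => j ∈ B i ∨ i ∈ B j)).card
          ≤ ∑ i ∈ A, ((A.filter (fun j => j ∈ B i)).card + (A.filter (fun j => i ∈ B j)).card) := by
            refine Finset.sum_le_sum (fun i _ => ?_)
            rw [Finset.filter_or]
            exact Finset.card_union_le _ _
        _ = ∑ i ∈ A, (A.filter (fun j => j ∈ B i)).card
            + ∑ i ∈ A, (A.filter (fun j => i ∈ B j)).card := Finset.sum_add_distrib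
        _ ≤ s * A.card + s * A.card := by
            refine Nat.add_le_add ?_ hswap
            calc ∑ i ∈ A, (A.filter (fun j => j ∈ B i)).card ≤ ∑ _i ∈ A, s :=
                  Finset.sum_le_sum hrow
              _ = A.card * s := by rw [Finset.sum_const, smul_eq_mul]
              _ = s * A.card := mul_comm _ _
        _ = 2*s*A.card := by ring
    have hex : ∃ i ∈ A, (A.filter (fun j => j ∈ B i ∨ i ∈ B j)).card ≤ 2*s := by
      by_contra hc
      push_neg at hc
      have h1 : (2*s+1) * A.card ≤ ∑ i ∈ A, (A.filter (fun j => j ∈ B i ∨ i ∈ B j)).card := by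
        calc (2*s+1) * A.card = A.card * (2*s+1) := mul_comm _ _
          _ = ∑ _i ∈ A, (2*s+1) := by rw [Finset.sum_const, smul_eq_mul]
          _ ≤ _ := Finset.sum_le_sum (fun i hi => hc i hi)
      have h2 : (2*s+1) * A.card ≤ 2*s * A.card := le_trans h1 hsum
      have h3 : 2*s * A.card < (2*s+1) * A.card :=
        Nat.mul_lt_mul_of_lt_of_le (by omega) le_rfl hApos
      omega
    obtain ⟨i, hiA, hideg⟩ := hex
    set N : Finset ι := insert i (A.filter (fun j => j ∈ B i ∨ i ∈ B j)) with hN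
    have hNcard : N.card ≤ 2*s+1 := by
      refine le_trans (Finset.card_insert_le _ _) ?_
      omega
    have hA' : (2*s+1) * n ≤ (A \ N).card := by
      have hle := Finset.le_card_sdiff N A
      have hmul : (2*s+1)*(n+1) = (2*s+1)*n + (2*s+1) := by ring
      rw [hmul] at hA
      obtain ⟨M, hM⟩ : ∃ M, (2*s+1)*n = M := ⟨_, rfl⟩
      rw [hM] at hA ⊢
      omega
    obtain ⟨I', hI'sub, hI'card, hI'ind⟩ := ih (A \ N) hA'
    have hiN : i ∈ N := Finset.mem_insert_self _ _
    have hinotI' : i ∉ I' := fun h => (Finset.mem_sdiff.mp (hI'sub h)).2 hiN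
    refine ⟨insert i I', ?_, ?_, ?_⟩
    · refine Finset.insert_subset hiA (hI'sub.trans (Finset.sdiff_subset))
    · rw [Finset.card_insert_of_notMem hinotI', hI'card]
    · intro a ha b hb hab
      rcases Finset.mem_insert.mp ha with ha' | ha' <;>
        rcases Finset.mem_insert.mp hb with hb' | hb'
      · exact absurd (ha'.trans hb'.symm) hab
      · -- a = i, b ∈ I'
        subst ha'
        have hbA : b ∈ A := (Finset.mem_sdiff.mp (hI'sub hb')).1
        have hbN : b ∉ N := (Finset.mem_sdiff.mp (hI'sub hb')).2
        intro hcon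
        exact hbN (Finset.mem_insert_of_mem (Finset.mem_filter.mpr ⟨hbA, Or.inl hcon⟩))
      · -- b = i, a ∈ I'
        subst hb'
        have haA : a ∈ A := (Finset.mem_sdiff.mp (hI'sub ha')).1
        have haN : a ∉ N := (Finset.mem_sdiff.mp (hI'sub ha')).2
        intro hcon
        exact haN (Finset.mem_insert_of_mem (Finset.mem_filter.mpr ⟨haA, Or.inr hcon⟩))
      · exact hI'ind a ha' b hb' hab

private lemma arith_facts_s14 (s r t : ℕ) (hrs : r ≤ s) (ht : 2 ≤ t) (hs : s < t * r)
    (x : ℕ) (hx : x = (t * r - s + t - 2) / (t - 1) - 1) :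
    x + 1 ≤ r ∧ t * (r - (x+1)) + (x+1) ≤ s := by
  obtain ⟨b, rfl⟩ : ∃ b, t = b + 2 := ⟨t - 2, by omega⟩
  obtain ⟨a, ha⟩ : ∃ a, s + a = (b+2)*r := ⟨(b+2)*r - s, Nat.add_sub_cancel' hs.le⟩
  rw [← ha] at hs
  have ha1 : 1 ≤ a := by omega
  have hsub : (b+2)*r - s = a := Nat.sub_eq_of_eq_add (by rw [← ha]; ring)
  rw [hsub] at hx
  have e1 : a + (b + 2) - 2 = a + b := by omega
  have e2 : b + 2 - 1 = b + 1 := by omega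
  rw [e1, e2] at hx
  have hdm := Nat.div_add_mod (a + b) (b + 1)
  set d := (a + b) / (b + 1) with hd
  set m := (a + b) % (b + 1) with hm
  have hmlt : m < b + 1 := Nat.mod_lt _ (by omega)
  -- hdm : (b+1) * d + m = a + b
  have hd1 : 1 ≤ d := by
    rcases Nat.eq_zero_or_pos d with h0 | h
    · rw [h0, Nat.mul_zero] at hdm; omega
    · exact h
  have hxd : x + 1 = d := by rw [hx]; omega
  rw [hxd]
  have hdr : d ≤ r := by
    by_contra hc
    push_neg at hc
    have h1 : (b+1)*(r+1) ≤ (b+1)*d := Nat.mul_le_mul_left _ hc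
    have e1 : (b+1)*(r+1) = (b+1)*r + b + 1 := by ring
    have e2 : (b+2)*r = (b+1)*r + r := by ring
    obtain ⟨P, hP⟩ : ∃ P, (b+1)*d = P := ⟨_, rfl⟩
    obtain ⟨Q, hQ⟩ : ∃ Q, (b+1)*r = Q := ⟨_, rfl⟩
    obtain ⟨R, hR⟩ : ∃ R, (b+1)*(r+1) = R := ⟨_, rfl⟩
    obtain ⟨T, hT⟩ : ∃ T, (b+2)*r = T := ⟨_, rfl⟩
    rw [hP, hR] at h1
    rw [hR, hQ] at e1
    rw [hT, hQ] at e2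
    rw [hP] at hdm
    rw [hT] at ha
    omega
  refine ⟨hdr, ?_⟩
  obtain ⟨q, hq⟩ : ∃ q, r = q + d := ⟨r - d, by omega⟩
  have hrd : r - d = q := by omega
  rw [hrd]
  have e3 : (b+2)*(q+d) = (b+2)*q + ((b+1)*d + d) := by ring
  rw [hq, e3] at ha
  obtain ⟨P, hP⟩ : ∃ P, (b+1)*d = P := ⟨_, rfl⟩
  obtain ⟨U, hU⟩ : ∃ U, (b+2)*q = U := ⟨_, rfl⟩
  rw [hP, hU] at ha
  rw [hP] at hdm
  rw [hU]
  omega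

/-- Let G be a tK_r-free graph, s ≥ r with tr > s, t ≥ 2, and
x = ⌈(tr−s)/(t−1)⌉ − 1. Then the family ℋ of (x+1)-element vertex subsets of G that induce
a clique and are contained in the vertex set of some s-clique of G does not contain c
pairwise disjoint members, for some constant c = c(s,t,r) independent of n and G. -/
theorem no_many_disjoint_extendable_cliques (s r t : ℕ) (hrs : r ≤ s) (hr : 2 ≤ r)
    (ht : 2 ≤ t) (hs : s < t * r) (x : ℕ) (hx : x = (t * r - s + t - 2) / (t - 1) - 1) :
    ∃ c : ℕ, ∀ (V : Type) (G : SimpleGraph V), TKrFree G t r →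
      ¬ ∃ f : Fin c → Finset V,
        (∀ i, G.IsNClique (x + 1) (f i) ∧
          ∃ S : Finset V, G.IsNClique s S ∧ f i ⊆ S) ∧
        ∀ i j : Fin c, i ≠ j → Disjoint (f i) (f j) := by
  classical
  obtain ⟨hxr, hkey⟩ := arith_facts_s14 s r t hrs ht hs x hx
  refine ⟨(2*s+1) * t, ?_⟩
  intro V G hfree h
  obtain ⟨f, hf, hdisj⟩ := h
  have hclq : ∀ i, G.IsNClique (x+1) (f i) := fun i => (hf i).1
  choose S hS hsub using fun i => (hf i).2
  set B : Fin ((2*s+1)*t) → Finset (Fin ((2*s+1)*t)) :=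
    fun i => Finset.univ.filter (fun j => j ≠ i ∧ ¬ Disjoint (S i) (f j)) with hBdef
  have hB : ∀ i, (B i).card ≤ s := by
    intro i
    have hpw : ∀ j ∈ B i, ∀ k ∈ B i, j ≠ k →
        Disjoint (S i ∩ f j) (S i ∩ f k) := by
      intro j _ k _ hjk
      exact Finset.disjoint_of_subset_left Finset.inter_subset_right
        (Finset.disjoint_of_subset_right Finset.inter_subset_right (hdisj j k hjk))
    calc (B i).card = ∑ _j ∈ B i, 1 := by simp
      _ ≤ ∑ j ∈ B i, (S i ∩ f j).card := by
          refine Finset.sum_le_sum (fun j hj => ?_)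
          have hnd := (Finset.mem_filter.mp hj).2.2
          rw [Finset.not_disjoint_iff_nonempty_inter] at hnd
          exact Finset.card_pos.mpr hnd
      _ = ((B i).biUnion (fun j => S i ∩ f j)).card := (Finset.card_biUnion hpw).symm
      _ ≤ (S i).card := by
          refine Finset.card_le_card ?_
          intro v hv
          obtain ⟨j, _, hvj⟩ := Finset.mem_biUnion.mp hv
          exact (Finset.mem_inter.mp hvj).1
      _ = s := (hS i).card_eq
  obtain ⟨I, hIsub, hIcard, hIind⟩ := indep_of_bounded s B hB t Finset.univ
    (le_of_eq (Finset.card_fin _).symm)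
  -- enumerate I
  let g : Fin t → Fin ((2*s+1)*t) := fun k => (I.orderIsoOfFin hIcard k : Fin ((2*s+1)*t))
  have hginj : Function.Injective g := fun a b hab =>
    (I.orderIsoOfFin hIcard).injective (Subtype.ext hab)
  have hgmem : ∀ k, g k ∈ I := fun k => (I.orderIsoOfFin hIcard k).2
  set q := r - (x+1) with hqdef
  have hcards : ∀ k : Fin t, t * q ≤ ((S (g k)) \ f (g k)).card := by
    intro k
    have h1 : ((S (g k)) \ f (g k)).card = s - (x+1) := by
      rw [Finset.card_sdiff_of_subset (hsub (g k)), (hS (g k)).card_eq, (hclq (g k)).card_eq]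
    rw [h1]
    obtain ⟨W, hW⟩ : ∃ W, t * q = W := ⟨_, rfl⟩
    rw [hW] at hkey ⊢
    omega
  obtain ⟨e, hesub, hecard, hedisj⟩ :=
    greedy_disjoint q t (fun k => S (g k) \ f (g k)) hcards
  apply hfree
  have hindep : ∀ j k : Fin t, j ≠ k → Disjoint (S (g k)) (f (g j)) := by
    intro j k hjk
    have hne : g j ≠ g k := fun hh => hjk (hginj hh)
    have := hIind (g k) (hgmem k) (g j) (hgmem j) hne.symm
    rw [hBdef] at this
    simp only [Finset.mem_filter, Finset.mem_univ, true_and, not_and, not_not] at this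
    exact this hne
  refine ⟨fun k => f (g k) ∪ e k, fun k => ?_, fun j k hjk => ?_⟩
  · have hsubS : f (g k) ∪ e k ⊆ S (g k) :=
      Finset.union_subset (hsub (g k)) ((hesub k).trans Finset.sdiff_subset)
    have hdfe : Disjoint (f (g k)) (e k) :=
      Finset.disjoint_of_subset_right (hesub k) Finset.disjoint_sdiff
    constructor
    · exact (hS (g k)).isClique.subset hsubS
    · rw [Finset.card_union_of_disjoint hdfe, (hclq (g k)).card_eq, hecard k]
      omega
  · have hne : g j ≠ g k := fun hh => hjk (hginj hh)
    rw [Finset.disjoint_union_left, Finset.disjoint_union_right,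
      Finset.disjoint_union_right]
    refine ⟨⟨hdisj _ _ hne, ?_⟩, ⟨?_, hedisj j k hjk⟩⟩
    · exact Finset.disjoint_of_subset_right ((hesub k).trans Finset.sdiff_subset)
        (hindep j k hjk).symm
    · exact Finset.disjoint_of_subset_left ((hesub j).trans Finset.sdiff_subset)
        (hindep k j (Ne.symm hjk))
end

section
/- Let M_1, …, M_k be matchings, each of size t, in an r-uniform hypergraph, with no rainbow matching of size t (i.e., no t pairwise disjoint hyperedges m_1,…,m_t with m_j ∈ M_{i_j} for distinct indices i_1,…,i_t). Then k ≤ F(r,t) for some finite bound F(r,t) depending only on r and t; in particular k ≤ t·(t·r choose r) · t! (any finite bound independent of the ground set suffices). -/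
/-!
Write row `i` of a `k × t` array `A` for the matching `M i`, its edges listed in columns
`c : Fin t` with `#(A i c) ≤ ρ c`, and induct on `∑ c, ρ c`. A maximal partial rainbow (cells in
distinct rows and columns, pairwise disjoint) has fewer than `t` cells, and its support `U`
satisfies `#U ≤ ∑ c, ρ c`. By maximality every row it misses meets `U` in every column it
misses, so grouping those rows by their trace `c ↦ A i c ∩ U` (at most `2 ^ (#U * t)` classes)
and deleting `U` from the rows of one class strictly decreases `∑ c, ρ c`. A rainbow of the
reduced rows lifts back: inside `U`, two cells of a class in distinct columns are traces of
distinct columns of a single row, hence disjoint.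
-/

open Finset Fintype Function

variable {V I : Type*} {t : ℕ}

def HasRainbow (A : I → Fin t → Finset V) : Prop :=
  ∃ (ι : Fin t → I) (γ : Fin t → Fin t), Injective ι ∧ Injective γ ∧
    Pairwise (Disjoint on fun j => A (ι j) (γ j))

theorem HasRainbow.of_comp {J : Type*} {A : I → Fin t → Finset V} {f : J → I}
    (hf : Injective f) (h : HasRainbow fun j => A (f j)) : HasRainbow A :=
  let ⟨ι, γ, hι, hγ, hd⟩ := h
  ⟨f ∘ ι, γ, hf.comp hι, hγ, hd⟩

theorem HasRainbow.of_sdiff [DecidableEq V] {A : I → Fin t → Finset V}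
    (hdisj : ∀ i, Pairwise (Disjoint on A i)) {U : Finset V} {τ : Fin t → Finset V}
    (hτ : ∀ i c, A i c ∩ U = τ c) (h : HasRainbow fun i c => A i c \ U) : HasRainbow A := by
  obtain ⟨ι, γ, hι, hγ, hd⟩ := h
  refine ⟨ι, γ, hι, hγ, fun j j' hjj' => disjoint_left.2 fun v hv hv' => ?_⟩
  by_cases hvU : v ∈ U
  · have : v ∈ A (ι j) (γ j') ∩ U := by
      rw [hτ, ← hτ (ι j')]
      exact mem_inter.2 ⟨hv', hvU⟩
    exact disjoint_left.1 (hdisj (ι j) (hγ.ne hjj')) hv (mem_inter.1 this).1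
  · exact disjoint_left.1 (hd hjj') (mem_sdiff.2 ⟨hv, hvU⟩) (mem_sdiff.2 ⟨hv', hvU⟩)

structure IsPartialRainbow (A : I → Fin t → Finset V) (p : Finset (I × Fin t)) : Prop where
  injOn_fst : Set.InjOn Prod.fst (p : Set (I × Fin t))
  injOn_snd : Set.InjOn Prod.snd (p : Set (I × Fin t))
  pairwiseDisjoint : (p : Set (I × Fin t)).PairwiseDisjoint (uncurry A)

namespace IsPartialRainbow

variable {A : I → Fin t → Finset V} {p : Finset (I × Fin t)}

theorem empty : IsPartialRainbow A ∅ :=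
  ⟨by simp, by simp, by simp⟩

theorem card_le (hp : IsPartialRainbow A p) : #p ≤ t := by
  simpa using card_le_card_of_injOn Prod.snd (fun _ _ => mem_univ _) hp.injOn_snd

theorem hasRainbow (hp : IsPartialRainbow A p) (hcard : #p = t) : HasRainbow A := by
  let e : Fin t ≃ p := (p.equivFin.trans (finCongr hcard)).symm
  have he : ∀ {j j'}, (e j : I × Fin t) = e j' → j = j' := fun h => e.injective (Subtype.ext h)
  refine ⟨fun j => (e j).1.1, fun j => (e j).1.2, fun j j' h => ?_, fun j j' h => ?_,
    fun j j' hjj' => hp.pairwiseDisjoint (e j).2 (e j').2 (mt he hjj')⟩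
  · exact he (hp.injOn_fst (e j).2 (e j').2 h)
  · exact he (hp.injOn_snd (e j).2 (e j').2 h)

theorem insert [DecidableEq I] [DecidableEq V] {i : I} {c : Fin t}
    (hp : IsPartialRainbow A p) (hi : i ∉ p.image Prod.fst) (hc : c ∉ p.image Prod.snd)
    (hU : Disjoint (A i c) (p.biUnion (uncurry A))) : IsPartialRainbow A (insert (i, c) p) := by
  have hic : (i, c) ∉ (p : Set (I × Fin t)) := fun h => hi (mem_image_of_mem _ h)
  refine ⟨?_, ?_, ?_⟩ <;> rw [coe_insert]
  · exact (Set.injOn_insert hic).2 ⟨hp.injOn_fst, by simpa using hi⟩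
  · exact (Set.injOn_insert hic).2 ⟨hp.injOn_snd, by simpa using hc⟩
  · exact Set.pairwiseDisjoint_insert.2 ⟨hp.pairwiseDisjoint, fun q hq _ =>
      hU.mono_right (subset_biUnion_of_mem (uncurry A) hq)⟩

theorem card_biUnion_le [DecidableEq V] {ρ : Fin t → ℕ} (hp : IsPartialRainbow A p)
    (hA : ∀ i c, #(A i c) ≤ ρ c) : #(p.biUnion (uncurry A)) ≤ ∑ c, ρ c :=
  calc #(p.biUnion (uncurry A)) ≤ ∑ q ∈ p, ρ q.2 :=
        Finset.card_biUnion_le.trans (sum_le_sum fun q _ => hA q.1 q.2)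
    _ = ∑ c ∈ p.image Prod.snd, ρ c := (sum_image hp.injOn_snd).symm
    _ ≤ ∑ c, ρ c := sum_le_sum_of_subset (subset_univ _)

end IsPartialRainbow

theorem exists_maximal_isPartialRainbow [DecidableEq I] [DecidableEq V]
    {A : I → Fin t → Finset V} (hA : ¬ HasRainbow A) :
    ∃ p, IsPartialRainbow A p ∧ #p < t ∧ ∀ i ∉ p.image Prod.fst, ∀ c ∉ p.image Prod.snd,
      ¬ Disjoint (A i c) (p.biUnion (uncurry A)) := by
  let sizes : Set ℕ := {n | ∃ p, IsPartialRainbow A p ∧ #p = n}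
  have hbdd : BddAbove sizes := ⟨t, by rintro _ ⟨p, hp, rfl⟩; exact hp.card_le⟩
  obtain ⟨p, hp, hpmax⟩ := Nat.sSup_mem (s := sizes) ⟨0, ∅, .empty, rfl⟩ hbdd
  have hmax : ∀ q, IsPartialRainbow A q → #q ≤ #p := fun q hq =>
    hpmax ▸ le_csSup hbdd ⟨q, hq, rfl⟩
  refine ⟨p, hp, hp.card_le.lt_of_ne fun h => hA (hp.hasRainbow h), fun i hi c hc hU => ?_⟩
  have := hmax _ (hp.insert hi hc hU)
  rw [card_insert_of_notMem fun h => hi (mem_image_of_mem _ h)] at this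
  omega

theorem card_le_mul_two_pow_of_card_fiber_le [DecidableEq V] (A : I → Fin t → Finset V)
    (s : Finset I) (U : Finset V) {B : ℕ}
    (h : ∀ τ : Fin t → Finset V, #{i ∈ s | (fun c => A i c ∩ U) = τ} ≤ B) :
    #s ≤ B * 2 ^ (#U * t) :=
  calc #s ≤ B * #(piFinset fun _ : Fin t => U.powerset) :=
        card_le_mul_card_image_of_maps_to (fun i _ => by simp) _ fun τ _ => h τ
    _ = B * 2 ^ (#U * t) := by rw [card_piFinset_const, card_powerset, ← pow_mul]

def rainbowBound (t : ℕ) : ℕ → ℕ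
  | 0 => 0
  | n + 1 => t + 2 ^ (n * t) * rainbowBound t n

theorem card_le_rainbowBound [Fintype I] {ρ : Fin t → ℕ} {A : I → Fin t → Finset V} {n : ℕ}
    (hρ : ∑ c, ρ c < n) (hA : ∀ i c, #(A i c) ≤ ρ c) (hdisj : ∀ i, Pairwise (Disjoint on A i))
    (hrainbow : ¬ HasRainbow A) : Fintype.card I ≤ rainbowBound t n := by
  classical
  induction n generalizing I ρ A with
  | zero => exact absurd hρ (Nat.not_lt_zero _)
  | succ n ih =>
    obtain ⟨p, hp, hpt, hmax⟩ := exists_maximal_isPartialRainbow hrainbow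
    set U := p.biUnion (uncurry A)
    set R := univ \ p.image Prod.fst
    obtain ⟨c₀, -, hc₀⟩ : ∃ c₀ ∈ univ, c₀ ∉ p.image Prod.snd :=
      exists_mem_notMem_of_card_lt_card (card_image_le.trans_lt (by simpa using hpt))
    have hfiber (τ : Fin t → Finset V) :
        #{i ∈ R | (fun c => A i c ∩ U) = τ} ≤ rainbowBound t n := by
      set F := {i ∈ R | (fun c => A i c ∩ U) = τ}
      obtain hF | ⟨i, hi⟩ := F.eq_empty_or_nonempty
      · simp [hF]
      have hτ : ∀ i : F, ∀ c, A i c ∩ U = τ c := fun i c => congr_fun (mem_filter.1 i.2).2 c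
      have hτρ : ∀ c, #(τ c) ≤ ρ c := fun c =>
        hτ ⟨i, hi⟩ c ▸ (card_le_card inter_subset_left).trans (hA i c)
      -- `i` is a free row and `c₀` a free column, so maximality of `p` makes `τ c₀` nonempty.
      have hτ₀ : 0 < #(τ c₀) := card_pos.2 <| hτ ⟨i, hi⟩ c₀ ▸
        not_disjoint_iff_nonempty_inter.1 (hmax i (mem_sdiff.1 (mem_filter.1 hi).1).2 c₀ hc₀)
      rw [← Fintype.card_coe]
      refine ih (ρ := fun c => ρ c - #(τ c)) (A := fun (i : F) c => A i c \ U) ?_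
        (fun i c => ?_) (fun i c c' h => (hdisj i h).mono sdiff_subset sdiff_subset)
        fun h => hrainbow <| (h.of_sdiff (A := fun (i : F) => A i) (fun i => hdisj i) hτ).of_comp
          Subtype.val_injective
      · refine (sum_lt_sum (fun c _ => Nat.sub_le _ _) ⟨c₀, mem_univ _, ?_⟩).trans_le
          (Nat.lt_succ_iff.1 hρ)
        exact tsub_lt_self (hτ₀.trans_le (hτρ c₀)) hτ₀
      · rw [card_sdiff, inter_comm, hτ]
        exact Nat.sub_le_sub_right (hA _ _) _
    have hU : #U ≤ n := (hp.card_biUnion_le hA).trans (Nat.lt_succ_iff.1 hρ)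
    have hR : #R ≤ rainbowBound t n * 2 ^ (n * t) :=
      (card_le_mul_two_pow_of_card_fiber_le A R U hfiber).trans (by gcongr; norm_num)
    calc Fintype.card I ≤ #R + #(p.image Prod.fst) := card_le_card_sdiff_add_card
      _ ≤ rainbowBound t n * 2 ^ (n * t) + t := add_le_add hR (card_image_le.trans hpt.le)
      _ = rainbowBound t (n + 1) := by rw [rainbowBound, add_comm, mul_comm]

/-- For all r, t there is a finite bound F(r,t), independent of the ground
set, such that whenever M_1, …, M_k are matchings of size t in an r-uniform hypergraph with
no rainbow matching of size t (no t pairwise disjoint hyperedges taken from t distinct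
matchings), then k ≤ F(r,t). -/
theorem rainbow_matching_bound (r t : ℕ) :
    ∃ F : ℕ, ∀ (V : Type) (k : ℕ) (M : Fin k → Finset (Finset V)),
      (∀ i : Fin k, (∀ e ∈ M i, e.card = r) ∧ (M i).card = t ∧
        ∀ e ∈ M i, ∀ e' ∈ M i, e ≠ e' → Disjoint e e') →
      (¬ ∃ (ι : Fin t → Fin k) (m : Fin t → Finset V), Function.Injective ι ∧
        (∀ j, m j ∈ M (ι j)) ∧ ∀ j j' : Fin t, j ≠ j' → Disjoint (m j) (m j')) →
      k ≤ F := by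
  refine ⟨rainbowBound t (t * r + 1), fun V k M hM hno => ?_⟩
  let e (i : Fin k) : Fin t ≃ M i := ((M i).equivFin.trans (finCongr (hM i).2.1)).symm
  let A (i : Fin k) (c : Fin t) : Finset V := e i c
  have hA (i : Fin k) (c : Fin t) : A i c ∈ M i := (e i c).2
  simpa using card_le_rainbowBound (ρ := fun _ => r) (A := A) (by simp)
    (fun i c => ((hM i).1 _ (hA i c)).le)
    (fun i c c' hcc' => (hM i).2.2 _ (hA i c) _ (hA i c') fun h =>
      hcc' ((e i).injective (Subtype.ext h)))
    fun ⟨ι, γ, hι, _, hd⟩ =>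
      hno ⟨ι, fun j => A (ι j) (γ j), hι, fun j => hA _ _, fun _ _ h => hd h⟩
end

section
/- Let G be a K_{x+1}-free graph on m vertices, and suppose G contains a set D of vertices such that the family of x-cliques of G inside D contains no t−1 pairwise vertex-disjoint members. Then the number of x-cliques of G contained in D is O(m^{x−1}), with the implied constant depending only on x, t. -/
/-!
A maximal family `F` of pairwise disjoint `x`-cliques inside `D` has at most `t - 2` members,
so its union `B` has at most `(t - 2) x` vertices. By maximality every `x`-clique inside `D`
meets `B`, and through a fixed vertex there are at most `C(m, x - 1) ≤ m ^ (x - 1)` sets of size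
`x`; hence there are at most `(t - 2) x m ^ (x - 1)` such cliques.
-/

open SimpleGraph

namespace Finset

variable {α : Type*}

theorem exists_pairwiseDisjoint_subset_forall_not_disjoint_biUnion [DecidableEq α]
    (𝒮 : Finset (Finset α)) (h𝒮 : ∀ S ∈ 𝒮, S.Nonempty) :
    ∃ F ⊆ 𝒮, (F : Set (Finset α)).PairwiseDisjoint id ∧
      ∀ S ∈ 𝒮, ¬ Disjoint S (F.biUnion id) := by
  classical
  set 𝒟 := 𝒮.powerset.filter fun F : Finset (Finset α) =>
    (F : Set (Finset α)).PairwiseDisjoint id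
  obtain ⟨F, hFmax⟩ := 𝒟.exists_maximal ⟨∅, by simp [𝒟]⟩
  obtain ⟨hF𝒮, hFdisj⟩ := mem_filter.1 hFmax.prop
  refine ⟨F, mem_powerset.1 hF𝒮, hFdisj, fun S hS hSB => ?_⟩
  have hinsert : insert S F ∈ 𝒟 := by
    refine mem_filter.2 ⟨mem_powerset.2 (insert_subset hS (mem_powerset.1 hF𝒮)), ?_⟩
    rw [coe_insert]
    exact hFdisj.insert fun T hT _ => (disjoint_biUnion_right _ _ _).1 hSB T hT
  have hSF : S ∈ F := hFmax.le_of_ge hinsert (subset_insert S F) (mem_insert_self S F)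
  have hSself : Disjoint S S := hSB.mono_right (subset_biUnion_of_mem id hSF)
  exact (h𝒮 S hS).ne_empty (disjoint_self.1 hSself)

theorem exists_fin_pairwise_disjoint_of_le_card {F : Finset (Finset α)}
    (hF : (F : Set (Finset α)).PairwiseDisjoint id) {k : ℕ} (hk : k ≤ F.card) :
    ∃ f : Fin k → Finset α, (∀ i, f i ∈ F) ∧ ∀ i j, i ≠ j → Disjoint (f i) (f j) := by
  let e : Fin k ↪ F := (Fin.castLEEmb hk).trans F.equivFin.symm.toEmbedding
  refine ⟨fun i => e i, fun i => (e i).2, fun i j hij => ?_⟩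
  exact hF (e i).2 (e j).2 fun h => hij (e.injective (Subtype.ext h))

theorem card_filter_mem_le_choose [DecidableEq α] [Fintype α] {𝒮 : Finset (Finset α)} {r : ℕ}
    (h𝒮 : ∀ S ∈ 𝒮, S.card = r) (v : α) :
    (𝒮.filter (v ∈ ·)).card ≤ (Fintype.card α).choose (r - 1) := by
  rw [← card_univ, ← card_powersetCard]
  refine card_le_card_of_injOn (fun S => S.erase v) (fun S hS => ?_)
    ((erase_injOn' v).mono fun S hS => (mem_filter.1 hS).2)
  obtain ⟨hS, hvS⟩ := mem_filter.1 hS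
  exact mem_powersetCard.2 ⟨subset_univ _, by rw [card_erase_of_mem hvS, h𝒮 S hS]⟩

theorem card_le_card_mul_choose_of_forall_not_disjoint [DecidableEq α] [Fintype α]
    {𝒮 : Finset (Finset α)} {B : Finset α} {r : ℕ}
    (h𝒮 : ∀ S ∈ 𝒮, S.card = r) (hB : ∀ S ∈ 𝒮, ¬ Disjoint S B) :
    𝒮.card ≤ B.card * (Fintype.card α).choose (r - 1) := by
  have hcover : 𝒮 ⊆ B.biUnion fun v => 𝒮.filter (v ∈ ·) := fun S hS => by
    obtain ⟨v, hvS, hvB⟩ := not_disjoint_iff.1 (hB S hS)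
    exact mem_biUnion.2 ⟨v, hvB, mem_filter.2 ⟨hS, hvS⟩⟩
  exact (card_le_card hcover).trans
    (card_biUnion_le_card_mul _ _ _ fun v _ => card_filter_mem_le_choose h𝒮 v)

end Finset

open Finset in
/-- Let G be a K_{x+1}-free graph on m vertices containing a vertex set D
such that the family of x-cliques of G inside D has no t−1 pairwise vertex-disjoint
members. Then the number of x-cliques of G contained in D is O(m^{x−1}), with the implied
constant depending only on x and t. -/
theorem few_cliques_in_D (x t : ℕ) :
    ∃ C : ℝ, ∀ (m : ℕ) (G : SimpleGraph (Fin m)) (D : Finset (Fin m)),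
      G.CliqueFree (x + 1) →
      (¬ ∃ f : Fin (t - 1) → Finset (Fin m),
        (∀ i, G.IsNClique x (f i) ∧ f i ⊆ D) ∧
        ∀ i j : Fin (t - 1), i ≠ j → Disjoint (f i) (f j)) →
      (Set.ncard {S : Finset (Fin m) | G.IsNClique x S ∧ S ⊆ D} : ℝ) ≤
        C * (m : ℝ) ^ (x - 1) := by
  classical
  refine ⟨(t * x + 1 : ℕ), fun m G D _ hNo => ?_⟩
  set 𝒮 := univ.filter fun S : Finset (Fin m) => G.IsNClique x S ∧ S ⊆ D
  have h𝒮 : ∀ S ∈ 𝒮, S.card = x := fun S hS => (mem_filter.1 hS).2.1.card_eq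
  rw [show {S | G.IsNClique x S ∧ S ⊆ D} = (𝒮 : Set (Finset (Fin m))) by ext; simp [𝒮],
    Set.ncard_coe_finset]
  suffices 𝒮.card ≤ (t * x + 1) * m ^ (x - 1) by exact_mod_cast this
  rcases Nat.eq_zero_or_pos x with rfl | hx
  · have : 𝒮 ⊆ {∅} := fun S hS => mem_singleton.2 (card_eq_zero.1 (h𝒮 S hS))
    simpa using card_le_card this
  obtain ⟨F, hF𝒮, hFdisj, hFhit⟩ := exists_pairwiseDisjoint_subset_forall_not_disjoint_biUnion 𝒮
    fun S hS => card_pos.1 ((h𝒮 S hS).symm ▸ hx)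
  have hFcard : F.card ≤ t - 2 := by
    by_contra! hlt
    obtain ⟨f, hfF, hfdisj⟩ :=
      exists_fin_pairwise_disjoint_of_le_card hFdisj (k := t - 1) (by omega)
    exact hNo ⟨f, fun i => (mem_filter.1 (hF𝒮 (hfF i))).2, hfdisj⟩
  have hBcard : (F.biUnion id).card ≤ (t - 2) * x :=
    (card_biUnion_le_card_mul _ _ _ fun S hS => (h𝒮 S (hF𝒮 hS)).le).trans
      (Nat.mul_le_mul_right x hFcard)
  calc 𝒮.card ≤ (F.biUnion id).card * m.choose (x - 1) := by
        simpa using card_le_card_mul_choose_of_forall_not_disjoint h𝒮 hFhit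
    _ ≤ (t * x + 1) * m ^ (x - 1) := by
        gcongr
        · exact hBcard.trans (by nlinarith [Nat.sub_le t 2])
        · exact Nat.choose_le_pow m (x - 1)
end
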